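/- arXiv:2502.06765 — 7 statements merged into one kernel-verified Lean document; each statement's English description precedes it below -/
import Mathlib

section
/- Fix α ∈ (0,1), n ≥ 1, a measurable space Z, a model class F, and a loss ℓ. Assume the map D_n ↦ R̂(F,D_n) is measurable. Then L̂^ERM_α(F,D_n) := α · R̂(F,D_n) is a valid distribution-free lower bound on the model class risk of F; that is, for every probability distribution P on Z, P^n{D_n : R_P(F) ≥ α · R̂(F,D_n)} ≥ 1 − α. -/
open MeasureTheory
open scoped ENNReal NNReal BigOperators

lemma pi_map_eval_aux {Z : Type*} [MeasurableSpace Z] (P : Measure Z)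
    [IsProbabilityMeasure P] (n : ℕ) (i : Fin n) :
    (Measure.pi (fun _ : Fin n => P)).map (Function.eval i) = P := by
  refine Measure.ext fun s hs => ?_
  rw [Measure.map_apply (measurable_pi_apply i) hs, Set.eval_preimage,
    Measure.pi_pi]
  simp [Function.update_apply, apply_ite, Finset.prod_ite_eq']

/-- The scaled empirical model-class risk `α · R̂(F, D_n)` is a valid
distribution-free lower bound on the model class risk `R_P(F) = ⨅ f, E_P[ℓ f]`. -/
theorem erm_lower_bound_valid
    {Z F : Type*} [MeasurableSpace Z]
    (ℓ : F → Z → ℝ≥0) (hℓmeas : ∀ f : F, Measurable (ℓ f))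
    (α : ℝ) (hα : α ∈ Set.Ioo (0 : ℝ) 1) (n : ℕ) (hn : 1 ≤ n)
    (hmeas : Measurable fun D : Fin n → Z => ⨅ f : F, (∑ i, (ℓ f (D i) : ℝ≥0∞)) / n)
    (P : Measure Z) [IsProbabilityMeasure P] :
    ENNReal.ofReal (1 - α) ≤
      Measure.pi (fun _ : Fin n => P)
        {D | ENNReal.ofReal α * (⨅ f : F, (∑ i, (ℓ f (D i) : ℝ≥0∞)) / n)
              ≤ ⨅ f : F, ∫⁻ z, (ℓ f z : ℝ≥0∞) ∂P} := by
  obtain ⟨hα0, hα1⟩ := hα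
  set μ := Measure.pi (fun _ : Fin n => P) with hμ
  haveI : IsProbabilityMeasure μ := by rw [hμ]; infer_instance
  set g : (Fin n → Z) → ℝ≥0∞ := fun D => ⨅ f : F, (∑ i, (ℓ f (D i) : ℝ≥0∞)) / n with hg
  set r : ℝ≥0∞ := ⨅ f : F, ∫⁻ z, (ℓ f z : ℝ≥0∞) ∂P with hr
  set c : ℝ≥0∞ := ENNReal.ofReal α with hc
  have hc0 : c ≠ 0 := by
    simp only [hc, ne_eq, ENNReal.ofReal_eq_zero, not_le]; linarith
  have hctop : c ≠ ⊤ := ENNReal.ofReal_ne_top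
  have hn0 : (n : ℝ≥0∞) ≠ 0 := by
    simp only [ne_eq, Nat.cast_eq_zero]; omega
  have hnt : (n : ℝ≥0∞) ≠ ⊤ := ENNReal.natCast_ne_top n
  have hS : MeasurableSet {D | c * g D ≤ r} :=
    measurableSet_le (hmeas.const_mul c) measurable_const
  -- expectation bound: ∫ g ≤ r
  have hint : ∫⁻ D, g D ∂μ ≤ r := by
    refine le_iInf fun f => ?_
    refine le_trans (lintegral_mono fun D => iInf_le _ f) ?_
    have hmi : ∀ i : Fin n, Measurable fun D : Fin n → Z => (ℓ f (D i) : ℝ≥0∞) :=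
      fun i => ((hℓmeas f).comp (measurable_pi_apply i)).coe_nnreal_ennreal
    have heach : ∀ i : Fin n,
        ∫⁻ D, (ℓ f (D i) : ℝ≥0∞) ∂μ = ∫⁻ z, (ℓ f z : ℝ≥0∞) ∂P := by
      intro i
      exact (MeasurePreserving.lintegral_comp
        ⟨measurable_pi_apply i, pi_map_eval_aux P n i⟩
        ((hℓmeas f).coe_nnreal_ennreal))
    refine le_of_eq ?_
    calc ∫⁻ D, (∑ i, (ℓ f (D i) : ℝ≥0∞)) / n ∂μ
        = (∫⁻ D, ∑ i, (ℓ f (D i) : ℝ≥0∞) ∂μ) / n := by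
          simp_rw [div_eq_mul_inv]
          rw [lintegral_mul_const _ (Finset.measurable_sum _ fun i _ => hmi i)]
      _ = (∑ i : Fin n, ∫⁻ D, (ℓ f (D i) : ℝ≥0∞) ∂μ) / n := by
          rw [lintegral_finset_sum _ fun i _ => hmi i]
      _ = (n * ∫⁻ z, (ℓ f z : ℝ≥0∞) ∂P) / n := by
          simp [heach, Finset.sum_const, nsmul_eq_mul]
      _ = ∫⁻ z, (ℓ f z : ℝ≥0∞) ∂P := by
          rw [mul_comm, div_eq_mul_inv, mul_assoc, ENNReal.mul_inv_cancel hn0 hnt, mul_one]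
  -- bound the measure of the complement by α
  have hcompl : μ {D | c * g D ≤ r}ᶜ ≤ c := by
    rcases eq_or_ne r ⊤ with hrt | hrt
    · have : {D : Fin n → Z | c * g D ≤ r}ᶜ = ∅ := by
        ext D; simp [hrt]
      simp [this]
    rcases eq_or_ne r 0 with hr0 | hr0
    · have h0 : ∫⁻ D, g D ∂μ = 0 := le_antisymm (hr0 ▸ hint) zero_le
      have hae : μ {D | g D ≠ 0} = 0 := by
        have := (lintegral_eq_zero_iff hmeas).mp h0
        simpa [Filter.EventuallyEq, ae_iff] using this
      refine le_trans (le_of_eq ?_) (zero_le : 0 ≤ c)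
      refine measure_mono_null ?_ hae
      intro D hD
      simp only [Set.mem_compl_iff, Set.mem_setOf_eq, not_le, hr0] at hD
      simp only [Set.mem_setOf_eq]
      intro hgD
      rw [hgD, mul_zero] at hD
      exact absurd hD (lt_irrefl 0)
    · -- main case: Markov's inequality
      have hsub : {D : Fin n → Z | c * g D ≤ r}ᶜ ⊆ {D | r / c ≤ g D} := by
        intro D hD
        simp only [Set.mem_compl_iff, Set.mem_setOf_eq, not_le] at hD
        have : r / c < g D := by
          rw [ENNReal.div_lt_iff (Or.inl hc0) (Or.inl hctop), mul_comm]
          exact hD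
        exact this.le
      have hrc0 : r / c ≠ 0 := by
        simp only [ne_eq, ENNReal.div_eq_zero_iff, not_or]
        exact ⟨hr0, hctop⟩
      have hrct : r / c ≠ ⊤ := by
        simp only [ne_eq, ENNReal.div_eq_top, not_or, not_and_or]
        exact ⟨Or.inr hc0, Or.inl hrt⟩
      calc μ {D | c * g D ≤ r}ᶜ ≤ μ {D | r / c ≤ g D} := measure_mono hsub
        _ ≤ (∫⁻ D, g D ∂μ) / (r / c) :=
            meas_ge_le_lintegral_div hmeas.aemeasurable hrc0 hrct
        _ ≤ r / (r / c) := by gcongr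
        _ = c := ((ENNReal.eq_div_iff hrc0 hrct).mpr
              (ENNReal.div_mul_cancel hc0 hctop)).symm
  -- conclude
  have h1 : ENNReal.ofReal (1 - α) ≤ 1 - c := by
    rw [hc, ENNReal.ofReal_sub _ hα0.le, ENNReal.ofReal_one]
  refine h1.trans ?_
  rw [tsub_le_iff_right]
  calc (1 : ℝ≥0∞) = μ Set.univ := measure_univ.symm
    _ = μ {D | c * g D ≤ r} + μ {D | c * g D ≤ r}ᶜ :=
        (measure_add_measure_compl hS).symm
    _ ≤ μ {D | c * g D ≤ r} + c := by gcongr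
end

section
/- Fix α ∈ (0,1), n ≥ 1, a measurable space Z, a model class F, and a loss ℓ. Let L̂_α(F,·) : Z^n → [0,∞] be a valid distribution-free lower bound on the model class risk of F, and let P be a probability distribution on Z. Then for every N ≥ n such that R̂(F,D_N) = 0 holds P^N-almost surely (in particular for every N ≤ N(F,P), the interpolation capacity of F under P), it holds that P^n{ L̂_α(F, D_n) > 0 } ≤ α + n²/(2N). -/
open MeasureTheory
open scoped ENNReal NNReal BigOperators

lemma birthday_nat (N : ℕ) : ∀ k, k ≤ N →
    2 * N * N ^ k ≤ 2 * N * N.descFactorial k + k * k * N ^ k := by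
  intro k
  induction k with
  | zero => simp
  | succ k ih =>
    intro hk
    have hk' : k ≤ N := Nat.le_of_succ_le hk
    have h1 := ih hk'
    have h2 : N.descFactorial k ≤ N ^ k := Nat.descFactorial_le_pow N k
    rw [Nat.descFactorial_succ]
    obtain ⟨M, hM⟩ : ∃ M, N = M + k := ⟨N - k, by omega⟩
    subst hM
    have hsub : M + k - k = M := by omega
    rw [hsub, pow_succ]
    nlinarith [Nat.zero_le ((M+k).descFactorial k), Nat.zero_le ((M+k) ^ k),
      Nat.mul_le_mul_left (2 * k * (M+k)) h2]

lemma map_comp_pi {Z : Type*} [MeasurableSpace Z] (P : Measure Z) [IsProbabilityMeasure P]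
    {n N : ℕ} (φ : Fin n → Fin N) (hφ : Function.Injective φ) :
    Measure.map (fun D : Fin N → Z => D ∘ φ) (Measure.pi fun _ : Fin N => P)
      = Measure.pi fun _ : Fin n => P := by
  classical
  have hmeas : Measurable (fun D : Fin N → Z => D ∘ φ) :=
    measurable_pi_lambda _ fun i => measurable_pi_apply (φ i)
  refine (Measure.pi_eq fun s hs => ?_).symm
  rw [Measure.map_apply hmeas (MeasurableSet.univ_pi fun i => hs i)]
  set t : Fin N → Set Z := fun j => if h : ∃ i, φ i = j then s h.choose else Set.univ with ht
  have htphi : ∀ i, t (φ i) = s i := by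
    intro i
    have h : ∃ i', φ i' = φ i := ⟨i, rfl⟩
    simp only [ht, dif_pos h]
    exact congrArg s (hφ h.choose_spec)
  have hpre : (fun D : Fin N → Z => D ∘ φ) ⁻¹' Set.pi Set.univ s = Set.pi Set.univ t := by
    ext D
    simp only [Set.mem_preimage, Set.mem_pi, Set.mem_univ, true_implies, Function.comp]
    constructor
    · intro h j
      by_cases hj : ∃ i, φ i = j
      · simp only [ht, dif_pos hj]
        have := h hj.choose
        rwa [hj.choose_spec] at this
      · simp [ht, dif_neg hj]
    · intro h i
      have := h (φ i)
      rwa [htphi i] at this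
  rw [hpre, Measure.pi_pi]
  have h1 : ∏ j, P (t j) = ∏ j ∈ Finset.univ.image φ, P (t j) := by
    refine (Finset.prod_subset (Finset.subset_univ _) fun j _ hj => ?_).symm
    have hj' : ¬∃ i, φ i = j := by
      intro ⟨i, hi⟩; exact hj (Finset.mem_image.mpr ⟨i, Finset.mem_univ i, hi⟩)
    simp [ht, dif_neg hj']
  rw [h1, Finset.prod_image (fun i _ j _ h => hφ h)]
  exact Finset.prod_congr rfl fun i _ => by rw [htphi i]

lemma uniform_finite {N : ℕ} :
    IsFiniteMeasure ((N : ℝ≥0∞)⁻¹ • (Measure.count : Measure (Fin N))) := by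
  constructor
  rw [Measure.smul_apply, smul_eq_mul, Measure.count_univ]
  rcases Nat.eq_zero_or_pos N with h | h
  · simp [h]
  · exact ENNReal.mul_lt_top (by simp; exact_mod_cast h) (by simp)

lemma pi_uniform_apply {n N : ℕ} (p : (Fin n → Fin N) → Prop) [DecidablePred p] :
    Measure.pi (fun _ : Fin n => ((N : ℝ≥0∞)⁻¹ • Measure.count : Measure (Fin N)))
        {x | p x}
      = ((Finset.univ.filter p).card : ℝ≥0∞) * ((N : ℝ≥0∞) ^ n)⁻¹ := by
  classical
  haveI := uniform_finite (N := N)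
  have hsing : ∀ x : Fin n → Fin N,
      Measure.pi (fun _ : Fin n => ((N : ℝ≥0∞)⁻¹ • Measure.count : Measure (Fin N))) {x}
        = ((N : ℝ≥0∞) ^ n)⁻¹ := by
    intro x
    have hx : ({x} : Set (Fin n → Fin N)) = Set.pi Set.univ (fun i => {x i}) := by
      ext y; simp [funext_iff, Set.mem_pi]
    rw [hx, Measure.pi_pi]
    simp [Measure.count_singleton, ENNReal.inv_pow]
  have hT : {x | p x} = ⋃ x ∈ Finset.univ.filter p, ({x} : Set (Fin n → Fin N)) := by
    ext y; simp
  rw [hT, measure_biUnion_finset]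
  · simp [hsing, Finset.sum_const, mul_comm]
  · intro x _ y _ hxy
    simp [Set.disjoint_singleton, hxy]
  · intro x _
    exact measurableSet_singleton x


/-- If `L̂` is a valid distribution-free lower bound on the model class
risk, and for some `N ≥ n` the empirical model-class risk over `N` i.i.d. points is
`P^N`-almost surely zero (in particular for every `N` up to the interpolation capacity
`N(F,P)`), then `P^n{ L̂(D_n) > 0 } ≤ α + n²/(2N)`. -/
theorem hardness_interpolation_capacity
    {Z F : Type*} [MeasurableSpace Z]
    (ℓ : F → Z → ℝ≥0) (hℓmeas : ∀ f : F, Measurable (ℓ f))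
    (α : ℝ) (hα : α ∈ Set.Ioo (0 : ℝ) 1) (n : ℕ) (hn : 1 ≤ n)
    (L : (Fin n → Z) → ℝ≥0∞) (hLmeas : Measurable L)
    (hvalid : ∀ Q : Measure Z, IsProbabilityMeasure Q →
      ENNReal.ofReal (1 - α) ≤
        Measure.pi (fun _ : Fin n => Q)
          {D | L D ≤ ⨅ f : F, ∫⁻ z, (ℓ f z : ℝ≥0∞) ∂Q})
    (P : Measure Z) [IsProbabilityMeasure P]
    (N : ℕ) (hN : n ≤ N)
    (hinterp : ∀ᵐ D ∂(Measure.pi (fun _ : Fin N => P)),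
      (⨅ f : F, (∑ i, (ℓ f (D i) : ℝ≥0∞)) / N) = 0) :
    Measure.pi (fun _ : Fin n => P) {D | 0 < L D}
      ≤ ENNReal.ofReal (α + n ^ 2 / (2 * N)) := by
  classical
  set μn := Measure.pi fun _ : Fin n => P with hμn
  set μN := Measure.pi fun _ : Fin N => P with hμN
  have hNpos : 0 < N := lt_of_lt_of_le hn hN
  have hNne : (N : ℝ≥0∞) ≠ 0 := by exact_mod_cast hNpos.ne'
  have hNtop : (N : ℝ≥0∞) ≠ ⊤ := ENNReal.natCast_ne_top N
  have hKne : ((N : ℝ≥0∞) ^ n) ≠ 0 := pow_ne_zero n hNne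
  have hKtop : ((N : ℝ≥0∞) ^ n) ≠ ⊤ := ENNReal.pow_ne_top hNtop
  have hsetS : {D : Fin n → Z | 0 < L D} = {D | L D ≠ 0} := by
    ext D; simp [pos_iff_ne_zero]
  rw [hsetS]
  set p := μn {D | L D ≠ 0} with hp
  have hSne : MeasurableSet {D : Fin n → Z | L D ≠ 0} := by
    have : {D : Fin n → Z | L D ≠ 0} = (L ⁻¹' {0})ᶜ := by ext D; simp
    rw [this]
    exact (hLmeas (measurableSet_singleton 0)).compl
  have hprec : ∀ φ : Fin n → Fin N, Measurable (fun D : Fin N → Z => D ∘ φ) :=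
    fun φ => measurable_pi_lambda _ fun i => measurable_pi_apply (φ i)
  have hAmeas : ∀ φ : Fin n → Fin N, MeasurableSet {D : Fin N → Z | L (D ∘ φ) ≠ 0} :=
    fun φ => hSne.preimage (hprec φ)
  -- the uniform measure on Fin N
  set ν : Measure (Fin N) := (N : ℝ≥0∞)⁻¹ • Measure.count with hν
  haveI : IsFiniteMeasure ν := uniform_finite
  haveI hνprob : IsProbabilityMeasure ν := by
    constructor
    rw [hν, Measure.smul_apply, smul_eq_mul, Measure.count_univ]
    rw [show ((ENat.card (Fin N) : ℝ≥0∞)) = (N : ℝ≥0∞) by simp]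
    exact ENNReal.inv_mul_cancel hNne hNtop
  -- STEP B: a.e. bound on the fraction of "bad" subsampling maps
  have key : ∀ᵐ D ∂μN,
      ((Finset.univ.filter fun x : Fin n → Fin N => L (D ∘ x) ≠ 0).card : ℝ≥0∞)
        * ((N : ℝ≥0∞) ^ n)⁻¹ ≤ ENNReal.ofReal α := by
    filter_upwards [hinterp] with D hD
    have hDmeas : Measurable D := measurable_from_top
    set Q : Measure Z := Measure.map D ν with hQ
    haveI : IsProbabilityMeasure Q := Measure.isProbabilityMeasure_map hDmeas.aemeasurable
    have hint : ∀ f : F, ∫⁻ z, (ℓ f z : ℝ≥0∞) ∂Q = (∑ i, (ℓ f (D i) : ℝ≥0∞)) / N := by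
      intro f
      rw [hQ, lintegral_map (hℓmeas f).coe_nnreal_ennreal hDmeas, hν,
        lintegral_smul_measure, lintegral_count, tsum_fintype, ENNReal.div_eq_inv_mul, smul_eq_mul]
    have hQv := hvalid Q ‹_›
    simp only [hint] at hQv
    rw [hD] at hQv
    -- rewrite pi Q as pushforward of pi ν
    have hcomp : Measurable (fun x : Fin n → Fin N => D ∘ x) :=
      measurable_pi_lambda _ fun i => hDmeas.comp (measurable_pi_apply i)
    have hpiQ : Measure.pi (fun _ : Fin n => Q)
        = Measure.map (fun x : Fin n → Fin N => D ∘ x) (Measure.pi fun _ : Fin n => ν) := by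
      refine Measure.pi_eq fun s hs => ?_
      rw [Measure.map_apply hcomp (MeasurableSet.univ_pi hs)]
      have hpre2 : (fun x : Fin n → Fin N => D ∘ x) ⁻¹' Set.pi Set.univ s
          = Set.pi Set.univ fun i => D ⁻¹' s i := by
        ext x; simp [Function.comp]
      rw [hpre2, Measure.pi_pi]
      exact Finset.prod_congr rfl fun i _ => (Measure.map_apply hDmeas (hs i)).symm
    have hs0 : MeasurableSet {D' : Fin n → Z | L D' ≤ 0} := by
      have : {D' : Fin n → Z | L D' ≤ 0} = L ⁻¹' {0} := by
        ext D'; simp [le_zero_iff]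
      rw [this]; exact hLmeas (measurableSet_singleton 0)
    rw [hpiQ, Measure.map_apply hcomp hs0] at hQv
    have hset0 : (fun x : Fin n → Fin N => D ∘ x) ⁻¹' {D' | L D' ≤ 0}
        = {x : Fin n → Fin N | L (D ∘ x) = 0} := by
      ext x; simp [le_zero_iff]
    rw [hset0, pi_uniform_apply (fun x => L (D ∘ x) = 0)] at hQv
    -- counting
    set c0 := (Finset.univ.filter fun x : Fin n → Fin N => L (D ∘ x) = 0).card with hc0
    set c1 := (Finset.univ.filter fun x : Fin n → Fin N => L (D ∘ x) ≠ 0).card with hc1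
    have hcc : c0 + c1 = N ^ n := by
      rw [hc0, hc1, Finset.card_filter_add_card_filter_not]
      simp [Fintype.card_fun]
    have hsum : (c1 : ℝ≥0∞) * ((N : ℝ≥0∞) ^ n)⁻¹ + (c0 : ℝ≥0∞) * ((N : ℝ≥0∞) ^ n)⁻¹ = 1 := by
      rw [← add_mul]
      have : (c1 : ℝ≥0∞) + (c0 : ℝ≥0∞) = ((N : ℝ≥0∞) ^ n) := by
        rw [← Nat.cast_add]
        rw [Nat.add_comm, hcc]
        push_cast
        ring
      rw [this]
      exact ENNReal.mul_inv_cancel hKne hKtop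
    have hone : ENNReal.ofReal α + ENNReal.ofReal (1 - α) = 1 := by
      rw [← ENNReal.ofReal_add (le_of_lt hα.1) (by linarith [hα.2])]
      norm_num
    have hle : (c1 : ℝ≥0∞) * ((N : ℝ≥0∞) ^ n)⁻¹ + ENNReal.ofReal (1 - α)
        ≤ ENNReal.ofReal α + ENNReal.ofReal (1 - α) := by
      rw [hone]
      rw [← hsum]
      exact add_le_add_right hQv _
    exact (ENNReal.add_le_add_iff_right ENNReal.ofReal_ne_top).mp hle
  -- STEP C: integrate
  have hsum_le : ∑ φ : Fin n → Fin N, μN {D : Fin N → Z | L (D ∘ φ) ≠ 0}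
      ≤ ENNReal.ofReal α * (N : ℝ≥0∞) ^ n := by
    have hint2 : ∫⁻ D, ((Finset.univ.filter fun x : Fin n → Fin N => L (D ∘ x) ≠ 0).card : ℝ≥0∞) ∂μN
        = ∑ φ : Fin n → Fin N, μN {D : Fin N → Z | L (D ∘ φ) ≠ 0} := by
      have hcard : ∀ D : Fin N → Z,
          ((Finset.univ.filter fun x : Fin n → Fin N => L (D ∘ x) ≠ 0).card : ℝ≥0∞)
            = ∑ φ : Fin n → Fin N,
                Set.indicator {D' : Fin N → Z | L (D' ∘ φ) ≠ 0} (fun _ => (1 : ℝ≥0∞)) D := by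
        intro D
        rw [Finset.card_filter]
        push_cast
        refine Finset.sum_congr rfl fun φ _ => ?_
        by_cases h : L (D ∘ φ) ≠ 0
        · simp [Set.indicator_apply, h]
        · simp [Set.indicator_apply, h]
      simp_rw [hcard]
      rw [lintegral_finset_sum _ fun φ _ => measurable_const.indicator (hAmeas φ)]
      refine Finset.sum_congr rfl fun φ _ => ?_
      rw [lintegral_indicator_const (hAmeas φ), one_mul]
    have hIle : (∫⁻ D, ((Finset.univ.filter fun x : Fin n → Fin N => L (D ∘ x) ≠ 0).card : ℝ≥0∞) ∂μN)
        * ((N : ℝ≥0∞) ^ n)⁻¹ ≤ ENNReal.ofReal α := by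
      rw [← lintegral_mul_const' _ _ (by simp [hKne])]
      calc ∫⁻ D, ((Finset.univ.filter fun x : Fin n → Fin N => L (D ∘ x) ≠ 0).card : ℝ≥0∞)
              * ((N : ℝ≥0∞) ^ n)⁻¹ ∂μN
          ≤ ∫⁻ _, ENNReal.ofReal α ∂μN := lintegral_mono_ae key
        _ = ENNReal.ofReal α := by simp
    rw [hint2] at hIle
    calc ∑ φ : Fin n → Fin N, μN {D : Fin N → Z | L (D ∘ φ) ≠ 0}
        = (∑ φ : Fin n → Fin N, μN {D : Fin N → Z | L (D ∘ φ) ≠ 0})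
            * ((N : ℝ≥0∞) ^ n)⁻¹ * (N : ℝ≥0∞) ^ n := by
          rw [mul_assoc, ENNReal.inv_mul_cancel hKne hKtop, mul_one]
      _ ≤ ENNReal.ofReal α * (N : ℝ≥0∞) ^ n := mul_le_mul_left hIle _
  -- STEP D: injective maps give exactly p
  have hterm : ∀ φ : Fin n → Fin N, Function.Injective φ →
      μN {D : Fin N → Z | L (D ∘ φ) ≠ 0} = p := by
    intro φ hφ
    have : {D : Fin N → Z | L (D ∘ φ) ≠ 0}
        = (fun D : Fin N → Z => D ∘ φ) ⁻¹' {D' : Fin n → Z | L D' ≠ 0} := rfl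
    rw [this, ← Measure.map_apply (hprec φ) hSne, map_comp_pi P φ hφ]
  have hinjcard : (Finset.univ.filter fun φ : Fin n → Fin N => Function.Injective φ).card
      = N.descFactorial n := by
    rw [← Fintype.card_subtype]
    rw [Fintype.card_congr (Equiv.subtypeInjectiveEquivEmbedding (Fin n) (Fin N))]
    simp [Fintype.card_embedding_eq]
  have hdp : (N.descFactorial n : ℝ≥0∞) * p ≤ ENNReal.ofReal α * (N : ℝ≥0∞) ^ n := by
    calc (N.descFactorial n : ℝ≥0∞) * p
        = ∑ φ ∈ Finset.univ.filter fun φ : Fin n → Fin N => Function.Injective φ,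
            μN {D : Fin N → Z | L (D ∘ φ) ≠ 0} := by
          rw [Finset.sum_congr rfl fun φ hφ => hterm φ (Finset.mem_filter.mp hφ).2]
          rw [Finset.sum_const, hinjcard, nsmul_eq_mul]
      _ ≤ ∑ φ : Fin n → Fin N, μN {D : Fin N → Z | L (D ∘ φ) ≠ 0} :=
          Finset.sum_le_sum_of_subset (Finset.filter_subset _ _)
      _ ≤ ENNReal.ofReal α * (N : ℝ≥0∞) ^ n := hsum_le
  -- STEP E: conclude
  have hp1 : p ≤ 1 := prob_le_one
  have hdesc_le : N.descFactorial n ≤ N ^ n := Nat.descFactorial_le_pow N n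
  have hKsplit : ((N : ℝ≥0∞) ^ n)
      = (N.descFactorial n : ℝ≥0∞) + ((N ^ n - N.descFactorial n : ℕ) : ℝ≥0∞) := by
    rw [← Nat.cast_add, Nat.add_sub_cancel' hdesc_le]
    push_cast; ring
  have hmain : p * ((N : ℝ≥0∞) ^ n)
      ≤ ENNReal.ofReal α * (N : ℝ≥0∞) ^ n + ((N ^ n - N.descFactorial n : ℕ) : ℝ≥0∞) := by
    calc p * ((N : ℝ≥0∞) ^ n)
        = p * (N.descFactorial n : ℝ≥0∞)
            + p * ((N ^ n - N.descFactorial n : ℕ) : ℝ≥0∞) := by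
          rw [← mul_add, ← hKsplit]
      _ ≤ ENNReal.ofReal α * (N : ℝ≥0∞) ^ n + ((N ^ n - N.descFactorial n : ℕ) : ℝ≥0∞) := by
          refine add_le_add ?_ ?_
          · rw [mul_comm]; exact hdp
          · calc p * ((N ^ n - N.descFactorial n : ℕ) : ℝ≥0∞)
                ≤ 1 * ((N ^ n - N.descFactorial n : ℕ) : ℝ≥0∞) := mul_le_mul_left hp1 _
              _ = _ := one_mul _
  have hpfinal : p ≤ ENNReal.ofReal α
      + ((N ^ n - N.descFactorial n : ℕ) : ℝ≥0∞) * ((N : ℝ≥0∞) ^ n)⁻¹ := by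
    calc p = p * ((N : ℝ≥0∞) ^ n) * ((N : ℝ≥0∞) ^ n)⁻¹ := by
          rw [mul_assoc, ENNReal.mul_inv_cancel hKne hKtop, mul_one]
      _ ≤ (ENNReal.ofReal α * (N : ℝ≥0∞) ^ n + ((N ^ n - N.descFactorial n : ℕ) : ℝ≥0∞))
            * ((N : ℝ≥0∞) ^ n)⁻¹ := mul_le_mul_left hmain _
      _ = ENNReal.ofReal α + ((N ^ n - N.descFactorial n : ℕ) : ℝ≥0∞) * ((N : ℝ≥0∞) ^ n)⁻¹ := by
          rw [add_mul, mul_assoc, ENNReal.mul_inv_cancel hKne hKtop, mul_one]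
  -- bound the defect term
  have hnat : (N ^ n - N.descFactorial n) * (2 * N) ≤ n ^ 2 * N ^ n := by
    have hb := birthday_nat N n hN
    obtain ⟨M, hM⟩ : ∃ M, N ^ n = N.descFactorial n + M :=
      ⟨N ^ n - N.descFactorial n, (Nat.add_sub_cancel' hdesc_le).symm⟩
    have hsubM : N ^ n - N.descFactorial n = M := by omega
    rw [hsubM, hM]
    rw [hM] at hb
    have he1 : 2 * N * (N.descFactorial n + M) = 2 * N * N.descFactorial n + 2 * N * M := by
      ring
    have he2 : M * (2 * N) = 2 * N * M := by ring
    have he3 : n ^ 2 * (N.descFactorial n + M) = n * n * (N.descFactorial n + M) := by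
      ring
    rw [he2, he3]
    omega
  have hdefect : ((N ^ n - N.descFactorial n : ℕ) : ℝ≥0∞) * ((N : ℝ≥0∞) ^ n)⁻¹
      ≤ ((n : ℝ≥0∞) ^ 2) / (2 * (N : ℝ≥0∞)) := by
    rw [← div_eq_mul_inv]
    rw [ENNReal.div_le_iff hKne hKtop]
    have hcomm : ((n : ℝ≥0∞) ^ 2 / (2 * (N : ℝ≥0∞))) * (N : ℝ≥0∞) ^ n
        = (n : ℝ≥0∞) ^ 2 * (N : ℝ≥0∞) ^ n / (2 * (N : ℝ≥0∞)) := by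
      rw [div_eq_mul_inv, div_eq_mul_inv]; ring
    rw [hcomm, ENNReal.le_div_iff_mul_le (Or.inl (by simp [hNne])) (Or.inl (ENNReal.mul_ne_top (by simp) hNtop))]
    calc ((N ^ n - N.descFactorial n : ℕ) : ℝ≥0∞) * (2 * (N : ℝ≥0∞))
        = (((N ^ n - N.descFactorial n) * (2 * N) : ℕ) : ℝ≥0∞) := by push_cast; ring
      _ ≤ ((n ^ 2 * N ^ n : ℕ) : ℝ≥0∞) := by exact_mod_cast Nat.cast_le.mpr hnat
      _ = (n : ℝ≥0∞) ^ 2 * (N : ℝ≥0∞) ^ n := by push_cast; ring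
  have hfrac_eq : ((n : ℝ≥0∞) ^ 2) / (2 * (N : ℝ≥0∞)) = ENNReal.ofReal ((n : ℝ) ^ 2 / (2 * N)) := by
    rw [ENNReal.ofReal_div_of_pos (by positivity)]
    congr 1
    · rw [ENNReal.ofReal_pow (by positivity), ENNReal.ofReal_natCast]
    · rw [ENNReal.ofReal_mul (by norm_num), ENNReal.ofReal_natCast]
      norm_num
  calc p ≤ ENNReal.ofReal α
        + ((N ^ n - N.descFactorial n : ℕ) : ℝ≥0∞) * ((N : ℝ≥0∞) ^ n)⁻¹ := hpfinal
    _ ≤ ENNReal.ofReal α + ((n : ℝ≥0∞) ^ 2) / (2 * (N : ℝ≥0∞)) := add_le_add_right hdefect _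
    _ = ENNReal.ofReal α + ENNReal.ofReal ((n : ℝ) ^ 2 / (2 * N)) := by rw [hfrac_eq]
    _ = ENNReal.ofReal (α + (n : ℝ) ^ 2 / (2 * N)) := by
        rw [← ENNReal.ofReal_add (le_of_lt hα.1) (by positivity)]
end

section
/- Fix α ∈ (0,1), n ≥ 1, a measurable space Z, a model class F, and a loss ℓ taking values in [0,B] for some B > 0. Define Δ_n ∈ (0,1] as the unique solution of −Δ_n − log(1−Δ_n) = B log(1/α)/(n R̂(F,D_n)) (with Δ_n = 1 when R̂(F,D_n) = 0). Then L̂^{ERM,B}_α(F,D_n) := (1−Δ_n) R̂(F,D_n) is a valid distribution-free lower bound on R_P(F): for every probability distribution P on Z, P^n{ D_n : R_P(F) ≥ (1−Δ_n) R̂(F,D_n) } ≥ 1 − α. -/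
open MeasureTheory
open scoped ENNReal NNReal BigOperators

namespace ErmAux

noncomputable def gg (x : ℝ) : ℝ := -x - Real.log (1 - x)
noncomputable def psi (x : ℝ) : ℝ := gg x / (1 - x)

lemma gg_hasDeriv {x : ℝ} (hx : x < 1) : HasDerivAt gg (x / (1 - x)) x := by
  have h1 : (1:ℝ) - x ≠ 0 := by intro h; linarith [h]
  have h : HasDerivAt (fun y : ℝ => 1 - y) (-1) x := by
    simpa using (hasDerivAt_id x).const_sub 1
  have hlog : HasDerivAt (fun y : ℝ => Real.log (1 - y)) ((1 - x)⁻¹ * (-1)) x :=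
    (Real.hasDerivAt_log h1).comp x h
  have h2 : HasDerivAt gg (-1 - (1 - x)⁻¹ * (-1)) x := ((hasDerivAt_id x).neg).sub hlog
  convert h2 using 1
  field_simp
  ring

lemma gg_contOn {s : Set ℝ} (hs : ∀ x ∈ s, x < 1) : ContinuousOn gg s :=
  fun x hx => ((gg_hasDeriv (hs x hx)).continuousAt).continuousWithinAt

lemma gg_strictMono : StrictMonoOn gg (Set.Ico (0:ℝ) 1) := by
  apply strictMonoOn_of_deriv_pos (convex_Ico 0 1)
  · exact fun x hx => ((gg_hasDeriv hx.2).continuousAt).continuousWithinAt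
  · intro x hx
    rw [interior_Ico] at hx
    rw [(gg_hasDeriv hx.2).deriv]
    have h1 : 0 < 1 - x := by linarith [hx.2]
    exact div_pos hx.1 h1

lemma psi_hasDeriv {x : ℝ} (hx : x < 1) : HasDerivAt psi (-Real.log (1-x) / (1-x)^2) x := by
  have h1 : (1:ℝ) - x ≠ 0 := by intro h; linarith [h]
  have h : HasDerivAt (fun y : ℝ => 1 - y) (-1) x := by
    simpa using (hasDerivAt_id x).const_sub 1
  have h2 : HasDerivAt psi ((x / (1 - x) * (1 - x) - gg x * (-1)) / (1 - x) ^ 2) x :=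
    (gg_hasDeriv hx).div h h1
  convert h2 using 1
  unfold gg
  field_simp
  ring

lemma psi_contOn {s : Set ℝ} (hs : ∀ x ∈ s, x < 1) : ContinuousOn psi s :=
  fun x hx => ((psi_hasDeriv (hs x hx)).continuousAt).continuousWithinAt

lemma psi_strictMono : StrictMonoOn psi (Set.Ico (0:ℝ) 1) := by
  apply strictMonoOn_of_deriv_pos (convex_Ico 0 1)
  · exact fun x hx => ((psi_hasDeriv hx.2).continuousAt).continuousWithinAt
  · intro x hx
    rw [interior_Ico] at hx
    rw [(psi_hasDeriv hx.2).deriv]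
    have h1 : 0 < 1 - x := by linarith [hx.2]
    have h2 : Real.log (1-x) < 0 := Real.log_neg (by linarith [hx.2]) (by linarith [hx.1])
    have h3 : 0 < -Real.log (1-x) := by linarith
    positivity


lemma gg_le {x : ℝ} (hx0 : 0 ≤ x) (hx1 : x < 1) : gg x ≤ x^2 / (1 - x) := by
  have h1 : (0:ℝ) < 1 - x := by linarith
  have h2 : Real.log ((1-x)⁻¹) ≤ (1-x)⁻¹ - 1 := Real.log_le_sub_one_of_pos (by positivity)
  rw [Real.log_inv] at h2
  unfold gg
  have h3 : (1-x)⁻¹ - 1 - x = x^2/(1-x) := by field_simp; ring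
  linarith

lemma exists_root {t : ℝ} (ht : 0 < t) : ∃ d, 0 < d ∧ d < 1 ∧ psi d = t := by
  set a := min (1/2) (Real.sqrt t / 2) with ha_def
  set b := 1 - min (1/2) (Real.exp (-(1+t))) with hb_def
  have ha0 : 0 < a := lt_min (by norm_num) (by positivity)
  have ha2 : a ≤ 1/2 := min_le_left _ _
  have hmb : 0 < min (1/2) (Real.exp (-(1+t))) := lt_min (by norm_num) (Real.exp_pos _)
  have hb2 : 1/2 ≤ b := by
    have := min_le_left (1/2 : ℝ) (Real.exp (-(1+t))); rw [hb_def]; linarith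
  have hb1 : b < 1 := by rw [hb_def]; linarith
  have hab : a ≤ b := le_trans ha2 hb2
  have hsub : Set.Icc a b ⊆ Set.Ico (0:ℝ) 1 := fun x hx =>
    ⟨le_trans ha0.le hx.1, lt_of_le_of_lt hx.2 hb1⟩
  have hcont : ContinuousOn psi (Set.Icc a b) := psi_contOn (fun x hx => (hsub hx).2)
  have hpa : psi a ≤ t := by
    have h1 : (0:ℝ) < 1 - a := by linarith
    have h2 : (1:ℝ)/2 ≤ 1 - a := by linarith
    have hga : gg a ≤ a^2/(1-a) := gg_le ha0.le (by linarith)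
    have h3 : psi a ≤ (a^2/(1-a))/(1-a) := by
      unfold psi; gcongr
    have h4 : (a^2/(1-a))/(1-a) ≤ 4*a^2 := by
      rw [div_div, div_le_iff₀ (by nlinarith)]
      nlinarith [mul_nonneg (sq_nonneg a) (show (0:ℝ) ≤ 4*((1-a)*(1-a)) - 1 by nlinarith)]
    have h5 : 4*a^2 ≤ t := by
      have h6 : a ≤ Real.sqrt t / 2 := min_le_right _ _
      nlinarith [Real.sq_sqrt ht.le, Real.sqrt_nonneg t]
    linarith
  have hpb : t ≤ psi b := by
    have h1 : (0:ℝ) < 1 - b := by rw [hb_def]; linarith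
    have h2 : 1 - b ≤ Real.exp (-(1+t)) := by rw [hb_def]; simp [min_le_right]
    have h3 : Real.log (1-b) ≤ -(1+t) := by
      calc Real.log (1-b) ≤ Real.log (Real.exp (-(1+t))) :=
            Real.log_le_log h1 h2
        _ = -(1+t) := Real.log_exp _
    have h4 : t ≤ gg b := by unfold gg; nlinarith [hb1]
    have h5 : gg b ≤ psi b := by
      unfold psi
      rw [le_div_iff₀ h1]
      nlinarith [ht.le, h4]
    linarith
  have hmem : t ∈ Set.Icc (psi a) (psi b) := ⟨hpa, hpb⟩
  obtain ⟨d, hd, hdt⟩ := intermediate_value_Icc hab hcont hmem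
  exact ⟨d, lt_of_lt_of_le ha0 hd.1, lt_of_le_of_lt hd.2 hb1, hdt⟩

lemma exp_le_bound {Bb x l : ℝ} (hB : 0 < Bb) (hx0 : 0 ≤ x) (hxB : x ≤ Bb) :
    Real.exp (l * x) ≤ 1 + (Real.exp (l * Bb) - 1) / Bb * x := by
  have hxb : x / Bb ≤ 1 := by rw [div_le_one hB]; exact hxB
  have h := convexOn_exp.2 (Set.mem_univ (0:ℝ)) (Set.mem_univ (l * Bb))
      (show (0:ℝ) ≤ 1 - x/Bb by linarith) (show (0:ℝ) ≤ x/Bb by positivity)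
      (show (1 - x/Bb) + x/Bb = 1 by ring)
  simp only [smul_eq_mul, mul_zero, zero_add, Real.exp_zero, mul_one] at h
  have harg : x / Bb * (l * Bb) = l * x := by field_simp
  rw [harg] at h
  have : 1 + (Real.exp (l * Bb) - 1) / Bb * x = (1 - x/Bb) + x/Bb * Real.exp (l*Bb) := by
    field_simp; ring
  linarith


lemma integrable_of_bounded {Ω : Type*} [MeasurableSpace Ω] (μ : Measure Ω)
    [IsFiniteMeasure μ] {f : Ω → ℝ} (hm : Measurable f) (C : ℝ) (hC : ∀ x, |f x| ≤ C) :
    Integrable f μ :=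
  Integrable.mono' (integrable_const C) hm.aestronglyMeasurable
    (Filter.Eventually.of_forall fun x => by simpa using hC x)

lemma pi_integral_prod_pow {Z : Type*} [MeasurableSpace Z] (P : Measure Z)
    [IsProbabilityMeasure P] (n : ℕ) (G : Z → ℝ) :
    ∫ x : Fin n → Z, ∏ i, G (x i) ∂(Measure.pi fun _ => P) = (∫ z, G z ∂P) ^ n := by
  letI : MeasureSpace Z := ⟨P⟩
  haveI : SigmaFinite (volume : Measure Z) := by change SigmaFinite P; infer_instance
  rw [show (Measure.pi fun _ : Fin n => P) = (volume : Measure (Fin n → Z)) from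
    (volume_pi).symm]
  rw [show (∫ z, G z ∂P) = ∫ z, G z from rfl]
  exact (MeasureTheory.integral_fintype_prod_eq_pow (ι := Fin n) (μ := P) G).trans (by rw [Fintype.card_fin]; rfl)

lemma pi_integral_eval {Z : Type*} [MeasurableSpace Z] (P : Measure Z)
    [IsProbabilityMeasure P] (n : ℕ) (G : Z → ℝ) (j : Fin n) :
    ∫ x : Fin n → Z, G (x j) ∂(Measure.pi fun _ => P) = ∫ z, G z ∂P := by
  letI : MeasureSpace Z := ⟨P⟩
  haveI : SigmaFinite (volume : Measure Z) := by change SigmaFinite P; infer_instance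
  rw [show (Measure.pi fun _ : Fin n => P) = (volume : Measure (Fin n → Z)) from
    (volume_pi).symm]
  rw [show (∫ z, G z ∂P) = ∫ z, G z from rfl]
  have h1 : ∀ x : Fin n → Z, G (x j) = ∏ i, (fun (i : Fin n) (z : Z) => if i = j then G z else 1) i (x i) := by
    intro x
    simp [Finset.prod_ite_eq']
  calc ∫ x : Fin n → Z, G (x j)
      = ∫ x : Fin n → Z, ∏ i, (fun (i : Fin n) (z : Z) => if i = j then G z else 1) i (x i) := by
        simp_rw [h1]
    _ = ∏ i, ∫ z, (fun (i : Fin n) (z : Z) => if i = j then G z else 1) i z :=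
        MeasureTheory.integral_fintype_prod_eq_prod (E := fun _ : Fin n => Z) (ι := Fin n) (μ := fun _ => P)
          (fun i z => if i = j then G z else 1)
    _ = ∫ z, G z := by
        simp only []
        rw [Finset.prod_eq_single j]
        · simp
        · intro i _ hij
          simp [hij]
        · simp

lemma compl_bound {Ω : Type*} [MeasurableSpace Ω] (μ : Measure Ω) [IsProbabilityMeasure μ]
    (A : Set Ω) {x : ℝ} (hx : 0 ≤ x) (h : μ Aᶜ ≤ ENNReal.ofReal x) :
    ENNReal.ofReal (1 - x) ≤ μ A := by
  rcases le_or_gt (1 - x) 0 with h0 | h0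
  · simp [ENNReal.ofReal_eq_zero.2 h0]
  have h1 : (1:ℝ≥0∞) ≤ μ A + μ Aᶜ := by
    calc (1:ℝ≥0∞) = μ Set.univ := (measure_univ).symm
      _ = μ (A ∪ Aᶜ) := by rw [Set.union_compl_self]
      _ ≤ μ A + μ Aᶜ := measure_union_le _ _
  have h2 : ENNReal.ofReal (1 - x) + ENNReal.ofReal x = 1 := by
    rw [← ENNReal.ofReal_add (by linarith) hx]
    norm_num
  have h3 : ENNReal.ofReal (1 - x) + ENNReal.ofReal x ≤ μ A + ENNReal.ofReal x := by
    rw [h2]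
    calc (1:ℝ≥0∞) ≤ μ A + μ Aᶜ := h1
      _ ≤ μ A + ENNReal.ofReal x := by exact add_le_add_right h _
  exact ENNReal.le_of_add_le_add_right ENNReal.ofReal_ne_top h3

end ErmAux

open Real in
set_option maxHeartbeats 1000000 in
/-- For a loss bounded in `[0,B]`, with `Δ_n ∈ (0,1]` the unique solution
of `−Δ_n − log(1−Δ_n) = B log(1/α)/(n R̂(F,D_n))` (and `Δ_n = 1` when `R̂(F,D_n) = 0`),
the quantity `(1−Δ_n) R̂(F,D_n)` is a valid distribution-free lower bound on the model
class risk `R_P(F)`. -/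
theorem erm_lower_bound_bounded_loss
    {Z F : Type*} [MeasurableSpace Z] [Nonempty F]
    (B : ℝ) (hB : 0 < B)
    (ℓ : F → Z → ℝ) (hℓmeas : ∀ f : F, Measurable (ℓ f))
    (hℓ : ∀ f z, ℓ f z ∈ Set.Icc (0 : ℝ) B)
    (α : ℝ) (hα : α ∈ Set.Ioo (0 : ℝ) 1) (n : ℕ) (hn : 1 ≤ n)
    (Δ : (Fin n → Z) → ℝ)
    (hΔmem : ∀ D, Δ D ∈ Set.Ioc (0 : ℝ) 1)
    (hΔ1 : ∀ D : Fin n → Z, (⨅ f : F, (∑ i, ℓ f (D i)) / n) = 0 → Δ D = 1)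
    (hΔeq : ∀ D : Fin n → Z, (⨅ f : F, (∑ i, ℓ f (D i)) / n) ≠ 0 →
      -Δ D - Real.log (1 - Δ D) =
        B * Real.log (1 / α) / (n * ⨅ f : F, (∑ i, ℓ f (D i)) / n))
    (P : Measure Z) [IsProbabilityMeasure P] :
    ENNReal.ofReal (1 - α) ≤
      Measure.pi (fun _ : Fin n => P)
        {D | (1 - Δ D) * (⨅ f : F, (∑ i, ℓ f (D i)) / n) ≤ ⨅ f : F, ∫ z, ℓ f z ∂P} := by
  classical
  have hn' : (0:ℝ) < n := by exact_mod_cast Nat.lt_of_lt_of_le Nat.zero_lt_one hn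
  set μn := Measure.pi (fun _ : Fin n => P) with hμn
  haveI : IsProbabilityMeasure μn := by rw [hμn]; infer_instance
  set r := ⨅ f : F, ∫ z, ℓ f z ∂P with hr
  set Remp : (Fin n → Z) → ℝ := fun D => ⨅ f : F, (∑ i, ℓ f (D i)) / n with hRemp
  show ENNReal.ofReal (1 - α) ≤ μn {D | (1 - Δ D) * Remp D ≤ r}
  have hℓ0 : ∀ f z, 0 ≤ ℓ f z := fun f z => (hℓ f z).1
  have hℓB : ∀ f z, ℓ f z ≤ B := fun f z => (hℓ f z).2
  have hS0 : ∀ (f : F) (D : Fin n → Z), 0 ≤ ∑ i, ℓ f (D i) :=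
    fun f D => Finset.sum_nonneg fun i _ => hℓ0 f (D i)
  have hSle : ∀ (f : F) (D : Fin n → Z), (∑ i, ℓ f (D i)) ≤ n * B := by
    intro f D
    calc (∑ i, ℓ f (D i)) ≤ ∑ _i : Fin n, B := Finset.sum_le_sum fun i _ => hℓB f (D i)
      _ = n * B := by simp [Finset.sum_const, nsmul_eq_mul]
  have hbdd : ∀ D : Fin n → Z, BddBelow (Set.range fun f : F => (∑ i, ℓ f (D i)) / n) := by
    intro D
    refine ⟨0, fun y hy => ?_⟩
    obtain ⟨f, rfl⟩ := hy
    exact div_nonneg (hS0 f D) hn'.le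
  have hRemp_nonneg : ∀ D, 0 ≤ Remp D :=
    fun D => Real.iInf_nonneg fun f => div_nonneg (hS0 f D) hn'.le
  have hRemp_le : ∀ (f : F) (D : Fin n → Z), Remp D ≤ (∑ i, ℓ f (D i)) / n :=
    fun f D => ciInf_le (hbdd D) f
  have hint_nonneg : ∀ f : F, 0 ≤ ∫ z, ℓ f z ∂P :=
    fun f => integral_nonneg fun z => hℓ0 f z
  have hr0 : 0 ≤ r := Real.iInf_nonneg hint_nonneg
  have hintℓ : ∀ f : F, Integrable (ℓ f) P := fun f =>
    ErmAux.integrable_of_bounded P (hℓmeas f) B fun z =>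
      abs_le.2 ⟨by linarith [hℓ0 f z, hB], hℓB f z⟩
  have hSmeas : ∀ f : F, Measurable (fun D : Fin n → Z => ∑ i, ℓ f (D i)) :=
    fun f => Finset.measurable_sum _ fun i _ => (hℓmeas f).comp (measurable_pi_apply i)
  rcases hr0.eq_or_lt with hr_eq | hr_pos
  · -- case r = 0
    have hδ : ∀ k : ℕ, (0:ℝ) < α / ((k+1) * 2^(k+2)) := by
      intro k
      have : (0:ℝ) < (k+1) * 2^(k+2) := by positivity
      exact div_pos hα.1 this
    have hchoice : ∀ k : ℕ, ∃ f : F, ∫ z, ℓ f z ∂P < α / ((k+1) * 2^(k+2)) := by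
      intro k
      apply exists_lt_of_ciInf_lt
      rw [← hr, ← hr_eq]
      exact hδ k
    choose fk hfk using hchoice
    set G := ⋂ k : ℕ, {D : Fin n → Z | (∑ i, ℓ (fk k) (D i)) / n ≤ 1/(k+1)} with hG
    have hGsub : G ⊆ {D | (1 - Δ D) * Remp D ≤ r} := by
      intro D hD
      have h0 : Remp D = 0 := by
        refine le_antisymm ?_ (hRemp_nonneg D)
        by_contra hpos
        push_neg at hpos
        obtain ⟨k, hk⟩ := exists_nat_one_div_lt hpos
        have h1 := Set.mem_iInter.1 hD k
        simp only [Set.mem_setOf_eq] at h1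
        have h2 := hRemp_le (fk k) D
        linarith
      simp only [Set.mem_setOf_eq, h0, mul_zero]
      exact hr0
    have hBk : ∀ k : ℕ,
        μn {D : Fin n → Z | (∑ i, ℓ (fk k) (D i)) / n ≤ 1/(k+1)}ᶜ ≤
          ENNReal.ofReal (α * (1/2)^(k+2)) := by
      intro k
      have hintk : Integrable (fun D : Fin n → Z => (∑ i, ℓ (fk k) (D i)) / n) μn := by
        refine ErmAux.integrable_of_bounded μn ((hSmeas (fk k)).div_const _) B fun D => ?_
        rw [abs_le]
        constructor
        · have := hS0 (fk k) D
          have h2 : (0:ℝ) ≤ (∑ i, ℓ (fk k) (D i)) / n := div_nonneg this hn'.le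
          linarith
        · rw [div_le_iff₀ hn']
          calc (∑ i, ℓ (fk k) (D i)) ≤ n * B := hSle (fk k) D
            _ = B * n := by ring
      have hEq : ∫ D, (∑ i, ℓ (fk k) (D i)) / n ∂μn = ∫ z, ℓ (fk k) z ∂P := by
        have hco : ∀ i : Fin n, Integrable (fun D : Fin n → Z => ℓ (fk k) (D i)) μn := by
          intro i
          refine ErmAux.integrable_of_bounded μn
            ((hℓmeas (fk k)).comp (measurable_pi_apply i)) B fun D => abs_le.2 ⟨?_, hℓB (fk k) (D i)⟩
          have := hℓ0 (fk k) (D i)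
          linarith
        have hsum : ∫ D, (∑ i, ℓ (fk k) (D i)) ∂μn = n * ∫ z, ℓ (fk k) z ∂P := by
          rw [integral_finset_sum Finset.univ (fun i _ => hco i), hμn]
          simp_rw [ErmAux.pi_integral_eval P n (ℓ (fk k))]
          rw [Finset.sum_const, Finset.card_fin, nsmul_eq_mul]
        rw [integral_div, hsum]
        field_simp
      have hMar := mul_meas_ge_le_integral_of_nonneg
        (Filter.Eventually.of_forall fun D => div_nonneg (hS0 (fk k) D) hn'.le) hintk
        (1/(k+1) : ℝ)
      rw [hEq] at hMar
      have hkpos : (0:ℝ) < 1/(k+1) := by positivity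
      have htr : (μn {D : Fin n → Z | 1/(k+1) ≤ (∑ i, ℓ (fk k) (D i)) / n}).toReal ≤
          α * (1/2)^(k+2) := by
        have h3 : ∫ z, ℓ (fk k) z ∂P ≤ α / ((k+1) * 2^(k+2)) := (hfk k).le
        have h4 : (α / ((k+1) * 2^(k+2))) / (1/(k+1)) = α * (1/2)^(k+2) := by
          field_simp
          rw [mul_assoc, ← mul_pow]; norm_num
        rw [← h4]
        rw [le_div_iff₀ hkpos]
        calc (μn {D : Fin n → Z | 1/(k+1) ≤ (∑ i, ℓ (fk k) (D i)) / n}).toReal * (1/(k+1))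
            = (1/(k+1)) * (μn {D : Fin n → Z | 1/(k+1) ≤ (∑ i, ℓ (fk k) (D i)) / n}).toReal := by
              ring
          _ ≤ ∫ z, ℓ (fk k) z ∂P := hMar
          _ ≤ α / ((k+1) * 2^(k+2)) := h3
      have hne : μn {D : Fin n → Z | 1/(k+1) ≤ (∑ i, ℓ (fk k) (D i)) / n} ≠ ⊤ :=
        measure_ne_top _ _
      have h5 : μn {D : Fin n → Z | 1/(k+1) ≤ (∑ i, ℓ (fk k) (D i)) / n} ≤
          ENNReal.ofReal (α * (1/2)^(k+2)) :=
        (ENNReal.le_ofReal_iff_toReal_le hne (by have := hα.1; positivity)).2 htr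
      refine le_trans (measure_mono ?_) h5
      intro D hD
      simp only [Set.mem_compl_iff, Set.mem_setOf_eq] at hD
      exact le_of_lt (lt_of_not_ge hD)
    have hGc : μn Gᶜ ≤ ENNReal.ofReal α := by
      rw [hG, Set.compl_iInter]
      refine le_trans (measure_iUnion_le _) ?_
      refine le_trans (ENNReal.tsum_le_tsum hBk) ?_
      have h1 : ∀ k : ℕ, ENNReal.ofReal (α * (1/2)^(k+2)) =
          ENNReal.ofReal α * (ENNReal.ofReal (1/2))^(k+2) := by
        intro k
        rw [ENNReal.ofReal_mul hα.1.le, ENNReal.ofReal_pow (by norm_num : (0:ℝ) ≤ 1/2)]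
      simp_rw [h1]
      rw [ENNReal.tsum_mul_left]
      have h2 : (ENNReal.ofReal (1/2) : ℝ≥0∞) = 2⁻¹ := by
        rw [show (1/2:ℝ) = 2⁻¹ by norm_num, ENNReal.ofReal_inv_of_pos two_pos,
          ENNReal.ofReal_ofNat]
      rw [h2]
      have h3 : ∑' k : ℕ, (2⁻¹ : ℝ≥0∞)^(k+2) = 2⁻¹ := by
        simp_rw [pow_add]
        rw [ENNReal.tsum_mul_right, ENNReal.tsum_geometric, ENNReal.one_sub_inv_two, inv_inv]
        rw [show ((2⁻¹:ℝ≥0∞)^2 = 4⁻¹) by rw [sq]; rw [← ENNReal.mul_inv] <;> norm_num]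
        rw [show ((4:ℝ≥0∞) = 2*2) by norm_num, ENNReal.mul_inv] <;> norm_num
        rw [mul_comm, mul_assoc, ENNReal.inv_mul_cancel] <;> norm_num
      rw [h3]
      calc ENNReal.ofReal α * 2⁻¹ ≤ ENNReal.ofReal α * 1 := by
            refine mul_le_mul_right ?_ _
            exact ENNReal.inv_le_one.2 one_le_two
        _ = ENNReal.ofReal α := mul_one _
    exact le_trans (ErmAux.compl_bound μn G hα.1.le hGc) (measure_mono hGsub)
  · -- case 0 < r
    set c := B * Real.log (1/α) / n with hc_def
    have hlogα : 0 < Real.log (1/α) := Real.log_pos (by rw [lt_div_iff₀ hα.1]; linarith [hα.2])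
    have hc : 0 < c := div_pos (mul_pos hB hlogα) hn'
    obtain ⟨d, hd0, hd1, hψd⟩ := ErmAux.exists_root (div_pos hc hr_pos)
    set u := 1 - d with hu_def
    have hu0 : 0 < u := by rw [hu_def]; linarith
    have hu1 : u < 1 := by rw [hu_def]; linarith
    have hlogu : Real.log u < 0 := Real.log_neg hu0 hu1
    have hgd : ErmAux.gg d = c * u / r := by
      have h := hψd
      unfold ErmAux.psi at h
      rw [← hu_def] at h
      field_simp at h
      field_simp
      linarith [h]
    have hgdpos : 0 < ErmAux.gg d := by rw [hgd]; positivity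
    set s := r / u with hs_def
    have hs_pos : 0 < s := div_pos hr_pos hu0
    have hgs : ErmAux.gg d = c / s := by rw [hgd, hs_def]; field_simp
    set lam := -Real.log u / B with hlam_def
    have hlam : 0 < lam := div_pos (by linarith) hB
    have hexplam : Real.exp (lam * B) = u⁻¹ := by
      rw [hlam_def, div_mul_cancel₀ _ hB.ne', Real.exp_neg, Real.exp_log hu0]
    set κ := n * d / (B * u) with hκ_def
    have hκ0 : 0 ≤ κ := div_nonneg (mul_nonneg hn'.le hd0.le) (mul_pos hB hu0).le
    have hclogα : c = -(B * Real.log α) / n := by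
      rw [hc_def, one_div, Real.log_inv]; ring
    have key2 : (n:ℝ) * (r * Real.log u + (1-u) * r) = B * Real.log α * u := by
      have h := hgd
      unfold ErmAux.gg at h
      rw [← hu_def, hclogα] at h
      have hd_eq : d = 1 - u := by rw [hu_def]; ring
      rw [hd_eq] at h
      field_simp at h
      linear_combination -h
    have Key : ∀ ε : ℝ, 0 < ε →
        ENNReal.ofReal (1 - α * Real.exp (κ * ε)) ≤ μn {D | (1 - Δ D) * Remp D ≤ r} := by
      intro ε hε
      obtain ⟨f, hf⟩ : ∃ f : F, ∫ z, ℓ f z ∂P < r + ε :=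
        exists_lt_of_ciInf_lt (by rw [← hr]; linarith)
      set A := {D : Fin n → Z | (∑ i, ℓ f (D i)) ≤ n * s} with hA_def
      have hAsub : A ⊆ {D | (1 - Δ D) * Remp D ≤ r} := by
        intro D hD
        simp only [hA_def, Set.mem_setOf_eq] at hD
        simp only [Set.mem_setOf_eq]
        have h1 : Remp D ≤ s := by
          refine le_trans (hRemp_le f D) ?_
          rw [div_le_iff₀ hn']
          linarith
        rcases (hRemp_nonneg D).eq_or_lt with h0 | h0
        · rw [← h0, mul_zero]; exact hr0
        · have heq := hΔeq D (ne_of_gt h0)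
          have hgΔ : ErmAux.gg (Δ D) = c / Remp D := by
            unfold ErmAux.gg
            rw [heq, hc_def, div_div]
          rcases ((hΔmem D).2).eq_or_lt with hΔone | hΔlt
          · rw [hΔone]; simp; exact hr0
          · have hΔ0 : 0 < Δ D := (hΔmem D).1
            have hmem1 : Δ D ∈ Set.Ico (0:ℝ) 1 := ⟨hΔ0.le, hΔlt⟩
            have hmemd : d ∈ Set.Ico (0:ℝ) 1 := ⟨hd0.le, hd1⟩
            have hgg_le : ErmAux.gg d ≤ ErmAux.gg (Δ D) := by
              rw [hgs, hgΔ]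
              exact div_le_div_of_nonneg_left hc.le h0 h1
            have hdle : d ≤ Δ D := by
              by_contra hcon
              push_neg at hcon
              have := ErmAux.gg_strictMono hmem1 hmemd hcon
              linarith
            have hψle : ErmAux.psi d ≤ ErmAux.psi (Δ D) :=
              ErmAux.psi_strictMono.monotoneOn hmemd hmem1 hdle
            have hψdpos : 0 < ErmAux.psi d := by
              rw [hψd]; exact div_pos hc hr_pos
            have hψΔpos : 0 < ErmAux.psi (Δ D) := lt_of_lt_of_le hψdpos hψle
            have hgΔpos : 0 < ErmAux.gg (Δ D) := lt_of_lt_of_le hgdpos hgg_le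
            have hRD : Remp D = c / ErmAux.gg (Δ D) := by
              rw [hgΔ]; field_simp
            have hΔne : (1:ℝ) - Δ D ≠ 0 := by linarith
            have hfinal : (1 - Δ D) * Remp D = c / ErmAux.psi (Δ D) := by
              rw [hRD, eq_div_iff (ne_of_gt hψΔpos)]
              unfold ErmAux.psi
              field_simp
            rw [hfinal]
            calc c / ErmAux.psi (Δ D) ≤ c / ErmAux.psi d :=
                  div_le_div_of_nonneg_left hc.le hψdpos hψle
              _ = r := by rw [hψd]; field_simp
      have hint : Integrable (fun D : Fin n → Z => Real.exp (lam * ∑ i, ℓ f (D i))) μn := by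
        refine ErmAux.integrable_of_bounded μn ((hSmeas f).const_mul lam).exp
          (Real.exp (lam * (n * B))) fun D => ?_
        rw [abs_of_pos (Real.exp_pos _)]
        exact Real.exp_le_exp.2 (mul_le_mul_of_nonneg_left (hSle f D) hlam.le)
      have cher := ProbabilityTheory.measure_ge_le_exp_mul_mgf
        (X := fun D : Fin n → Z => ∑ i, ℓ f (D i)) (μ := μn) (t := lam) (n * s) hlam.le hint
      have hmgf : ProbabilityTheory.mgf (fun D : Fin n → Z => ∑ i, ℓ f (D i)) μn lam =
          (∫ z, Real.exp (lam * ℓ f z) ∂P) ^ n := by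
        unfold ProbabilityTheory.mgf
        have hpt : ∀ D : Fin n → Z,
            Real.exp (lam * ∑ i, ℓ f (D i)) = ∏ i, Real.exp (lam * ℓ f (D i)) := by
          intro D; rw [Finset.mul_sum, Real.exp_sum]
        calc ∫ D, Real.exp (lam * ∑ i, ℓ f (D i)) ∂μn
            = ∫ D, ∏ i, Real.exp (lam * ℓ f (D i)) ∂μn := by simp_rw [hpt]
          _ = (∫ z, Real.exp (lam * ℓ f z) ∂P) ^ n := by
              rw [hμn]; exact ErmAux.pi_integral_prod_pow P n (fun z => Real.exp (lam * ℓ f z))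
      set q := (Real.exp (lam * B) - 1) / B with hq_def
      have hq0 : 0 ≤ q := by
        have h1 : (1:ℝ) ≤ Real.exp (lam * B) := by
          rw [← Real.exp_zero]
          exact Real.exp_le_exp.2 (by positivity)
        exact div_nonneg (by linarith) hB.le
      have hone : ∫ z, Real.exp (lam * ℓ f z) ∂P ≤ Real.exp (q * ∫ z, ℓ f z ∂P) := by
        have hint1 : Integrable (fun z => Real.exp (lam * ℓ f z)) P := by
          refine ErmAux.integrable_of_bounded P ((hℓmeas f).const_mul lam).exp
            (Real.exp (lam * B)) fun z => ?_
          rw [abs_of_pos (Real.exp_pos _)]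
          exact Real.exp_le_exp.2 (mul_le_mul_of_nonneg_left (hℓB f z) hlam.le)
        have hint2 : Integrable (fun z => 1 + q * ℓ f z) P :=
          (integrable_const 1).add ((hintℓ f).const_mul q)
        have hmono : ∫ z, Real.exp (lam * ℓ f z) ∂P ≤ ∫ z, (1 + q * ℓ f z) ∂P := by
          refine integral_mono hint1 hint2 fun z => ?_
          have h2 := ErmAux.exp_le_bound (l := lam) hB (hℓ0 f z) (hℓB f z)
          rw [hq_def]
          exact h2
        have heq2 : ∫ z, (1 + q * ℓ f z) ∂P = 1 + q * ∫ z, ℓ f z ∂P := by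
          rw [integral_add (integrable_const 1) ((hintℓ f).const_mul q), integral_const,
            integral_const_mul]
          simp
        have h3 : 1 + q * ∫ z, ℓ f z ∂P ≤ Real.exp (q * ∫ z, ℓ f z ∂P) :=
          by linarith [Real.add_one_le_exp (q * ∫ z, ℓ f z ∂P)]
        rw [heq2] at hmono
        linarith
      have hpow : (∫ z, Real.exp (lam * ℓ f z) ∂P) ^ n ≤
          Real.exp (n * (q * ∫ z, ℓ f z ∂P)) := by
        calc (∫ z, Real.exp (lam * ℓ f z) ∂P) ^ n
            ≤ (Real.exp (q * ∫ z, ℓ f z ∂P)) ^ n :=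
              pow_le_pow_left₀ (integral_nonneg fun z => (Real.exp_pos _).le) hone n
          _ = Real.exp (n * (q * ∫ z, ℓ f z ∂P)) := by rw [← Real.exp_nat_mul]
      have hqval : q = (u⁻¹ - 1) / B := by rw [hq_def, hexplam]
      have hexpo : Real.exp (-lam * (n * s)) * Real.exp (n * (q * ∫ z, ℓ f z ∂P)) ≤
          α * Real.exp (κ * ε) := by
        rw [← Real.exp_add,
          show (α : ℝ) * Real.exp (κ * ε) = Real.exp (Real.log α + κ * ε) by
            rw [Real.exp_add, Real.exp_log hα.1]]
        apply Real.exp_le_exp.2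
        have hμf : ∫ z, ℓ f z ∂P ≤ r + ε := hf.le
        have h4 : n * (q * ∫ z, ℓ f z ∂P) ≤ n * (q * (r + ε)) := by
          have := mul_le_mul_of_nonneg_left hμf hq0
          nlinarith [hn'.le]
        have heq3 : -lam * (n * s) + n * (q * (r + ε)) = Real.log α + κ * ε := by
          rw [hlam_def, hs_def, hqval, hκ_def, show d = 1 - u by rw [hu_def]; ring]
          field_simp
          linear_combination key2
        linarith
      have htr2 : (μn {D : Fin n → Z | n * s ≤ ∑ i, ℓ f (D i)}).toReal ≤
          α * Real.exp (κ * ε) := by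
        refine le_trans cher ?_
        rw [hmgf]
        calc Real.exp (-lam * (n * s)) * (∫ z, Real.exp (lam * ℓ f z) ∂P) ^ n
            ≤ Real.exp (-lam * (n * s)) * Real.exp (n * (q * ∫ z, ℓ f z ∂P)) :=
              mul_le_mul_of_nonneg_left hpow (Real.exp_pos _).le
          _ ≤ α * Real.exp (κ * ε) := hexpo
      have h6 : μn Aᶜ ≤ ENNReal.ofReal (α * Real.exp (κ * ε)) := by
        refine le_trans (measure_mono ?_)
          ((ENNReal.le_ofReal_iff_toReal_le (measure_ne_top _ _)
            (by have := hα.1; positivity)).2 htr2)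
        intro D hD
        simp only [hA_def, Set.mem_compl_iff, Set.mem_setOf_eq] at hD
        exact le_of_lt (lt_of_not_ge hD)
      exact le_trans (ErmAux.compl_bound μn A (by have := hα.1; positivity) h6)
        (measure_mono hAsub)
    have hcont : Filter.Tendsto (fun ε : ℝ => ENNReal.ofReal (1 - α * Real.exp (κ * ε)))
        (nhdsWithin 0 (Set.Ioi 0)) (nhds (ENNReal.ofReal (1 - α))) := by
      have h1 : Filter.Tendsto (fun ε : ℝ => 1 - α * Real.exp (κ * ε)) (nhds 0)
          (nhds (1 - α)) := by
        have hcnt : Continuous fun ε : ℝ => 1 - α * Real.exp (κ * ε) := by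
          continuity
        have := hcnt.tendsto 0
        simpa using this
      exact (ENNReal.continuous_ofReal.tendsto _).comp (h1.mono_left nhdsWithin_le_nhds)
    exact le_of_tendsto hcont (eventually_mem_nhdsWithin.mono fun ε hε => Key ε hε)
end

section
/- Fix α ∈ (0,1), n ≥ 1, a measurable space Z, a model class F, and a loss ℓ. Fix any B > 0, and define Δ_{n,B} ∈ (0,1] as the unique solution of −Δ_{n,B} − log(1−Δ_{n,B}) = B log(1/α)/(n R̂(F,D_n;B)) (with Δ_{n,B} = 1 when R̂(F,D_n;B) = 0). Then L̂^{ERM-trunc,B}_α(F,D_n) := (1−Δ_{n,B}) R̂(F,D_n;B) is a valid distribution-free lower bound on R_P(F): for every probability distribution P on Z, P^n{ D_n : R_P(F) ≥ (1−Δ_{n,B}) R̂(F,D_n;B) } ≥ 1 − α. -/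
open MeasureTheory
open scoped ENNReal NNReal BigOperators

/-- Strict monotonicity of `h(x) = -x - log(1-x)` on `[0,1)`. -/
lemma hfun_strictMonoOn : StrictMonoOn (fun x : ℝ => -x - Real.log (1 - x)) (Set.Ico 0 1) := by
  have hc : ContinuousOn (fun x : ℝ => -x - Real.log (1 - x)) (Set.Ico 0 1) := by
    refine ContinuousOn.sub continuousOn_id.neg ?_
    refine ContinuousOn.log (continuousOn_const.sub continuousOn_id) ?_
    intro x hx
    simp only [Set.mem_Ico] at hx
    intro h
    nlinarith [hx.2]
  refine strictMonoOn_of_deriv_pos (convex_Ico 0 1) hc ?_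
  intro x hx
  rw [interior_Ico] at hx
  obtain ⟨hx0, hx1⟩ := hx
  have h1x : (0:ℝ) < 1 - x := by linarith
  have hd : HasDerivAt (fun x : ℝ => -x - Real.log (1 - x)) (x / (1 - x)) x := by
    have hin : HasDerivAt (fun x : ℝ => 1 - x) (-1) x := by
      simpa using (hasDerivAt_id x).const_sub 1
    have hlog : HasDerivAt (fun x : ℝ => Real.log (1 - x)) ((1 - x)⁻¹ * (-1)) x :=
      (Real.hasDerivAt_log h1x.ne').comp x hin
    have := ((hasDerivAt_id x).neg).sub hlog
    have e : x / (1 - x) = -1 - (1 - x)⁻¹ * -1 := by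
      field_simp
      ring
    rw [e]
    exact this
  rw [hd.deriv]
  exact div_pos hx0 h1x
lemma exists_solution (c V : ℝ) (hc : 0 < c) (hV : 0 < V) :
    ∃ δ s : ℝ, δ ∈ Set.Ioo (0:ℝ) 1 ∧ (1 - δ) * s = V ∧
      (-δ - Real.log (1 - δ)) = c / s ∧ V < s := by
  set y := c / V with hy
  have hy0 : 0 < y := div_pos hc hV
  set b := 1 - Real.exp (-(y + 2)) with hb
  have hb0 : 0 < b := by
    have : Real.exp (-(y + 2)) < 1 := by
      rw [Real.exp_lt_one_iff]; linarith
    simp only [hb]; linarith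
  have hb1 : b < 1 := by
    have := Real.exp_pos (-(y + 2))
    simp only [hb]; linarith
  set g : ℝ → ℝ := fun x => -x - Real.log (1 - x) - c * (1 - x) / V with hg
  have hgc : ContinuousOn g (Set.Icc 0 b) := by
    refine ContinuousOn.sub (ContinuousOn.sub continuousOn_id.neg ?_) ?_
    · refine ContinuousOn.log (continuousOn_const.sub continuousOn_id) ?_
      intro x hx
      simp only [Set.mem_Icc] at hx
      intro h; nlinarith [hx.2]
    · exact (continuousOn_const.mul (continuousOn_const.sub continuousOn_id)).div_const V
  have hg0 : g 0 < 0 := by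
    simp only [hg]
    simp [Real.log_one]
    positivity
  have hgb : 0 < g b := by
    have h1b : 1 - b = Real.exp (-(y + 2)) := by simp [hb]
    have hlog : Real.log (1 - b) = -(y + 2) := by rw [h1b, Real.log_exp]
    have hcy : c / V = y := rfl
    have hye : y ≤ Real.exp y := by
      have := Real.add_one_le_exp y; linarith
    have hexp2 : Real.exp (-(2:ℝ)) < 1 := by rw [Real.exp_lt_one_iff]; norm_num
    have hkey : y * Real.exp (-(y + 2)) < 1 := by
      have h1 : Real.exp (-(y + 2)) = Real.exp (-y) * Real.exp (-(2:ℝ)) := by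
        rw [← Real.exp_add]; ring_nf
      have h2 : y * Real.exp (-y) ≤ 1 := by
        have hpos := Real.exp_pos (-y)
        have : y * Real.exp (-y) ≤ Real.exp y * Real.exp (-y) := by
          exact mul_le_mul_of_nonneg_right hye hpos.le
        rwa [← Real.exp_add, add_neg_cancel, Real.exp_zero] at this
      have hpos2 := Real.exp_pos (-(2:ℝ))
      nlinarith [Real.exp_pos (-y)]
    have : c * (1 - b) / V = y * Real.exp (-(y + 2)) := by
      rw [h1b]; field_simp [hy]; rw [hy, div_mul_cancel₀ _ hV.ne']
    simp only [hg]
    rw [hlog, this]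
    linarith
  obtain ⟨δ, hδmem, hδ⟩ := intermediate_value_Ioo hb0.le hgc (Set.mem_Ioo.2 ⟨hg0, hgb⟩)
  obtain ⟨hδ0, hδb⟩ := hδmem
  have hδ1 : δ < 1 := lt_trans hδb hb1
  have h1δ : 0 < 1 - δ := by linarith
  refine ⟨δ, V / (1 - δ), ⟨hδ0, hδ1⟩, ?_, ?_, ?_⟩
  · field_simp
  · have hs : c / (V / (1 - δ)) = c * (1 - δ) / V := by
      field_simp
    rw [hs]
    have : -δ - Real.log (1 - δ) - c * (1 - δ) / V = 0 := hδ
    linarith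
  · rw [lt_div_iff₀ h1δ]
    nlinarith
lemma mgf_bound {Z : Type*} [MeasurableSpace Z] (P : Measure Z) [IsProbabilityMeasure P]
    (X : Z → ℝ) (hX : Measurable X) (B lam : ℝ) (hB : 0 < B) (hlam : 0 ≤ lam)
    (hX0 : ∀ z, 0 ≤ X z) (hXB : ∀ z, X z ≤ B) :
    ∫⁻ z, ENNReal.ofReal (Real.exp (lam * X z)) ∂P ≤
      ENNReal.ofReal (Real.exp ((∫⁻ z, ENNReal.ofReal (X z) ∂P).toReal *
        (Real.exp (lam * B) - 1) / B)) := by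
  set Mh := ∫⁻ z, ENNReal.ofReal (X z) ∂P with hMh
  have hMh_le : Mh ≤ ENNReal.ofReal B := by
    calc Mh ≤ ∫⁻ _z, ENNReal.ofReal B ∂P :=
          lintegral_mono fun z => ENNReal.ofReal_le_ofReal (hXB z)
      _ = ENNReal.ofReal B := by simp
  have hMh_ne : Mh ≠ ∞ := ne_top_of_le_ne_top ENNReal.ofReal_ne_top hMh_le
  set M := Mh.toReal with hM
  have hM0 : 0 ≤ M := ENNReal.toReal_nonneg
  set k := Real.exp (lam * B) - 1 with hk
  have hk0 : 0 ≤ k := by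
    have : (1:ℝ) ≤ Real.exp (lam * B) := Real.one_le_exp (by positivity)
    simp only [hk]; linarith
  have hpt : ∀ z, Real.exp (lam * X z) ≤ 1 + (k / B) * X z := by
    intro z
    have ht0 : 0 ≤ X z / B := div_nonneg (hX0 z) hB.le
    have ht1 : X z / B ≤ 1 := (div_le_one hB).2 (hXB z)
    have hcvx := convexOn_exp.2 (Set.mem_univ (0:ℝ)) (Set.mem_univ (lam * B))
      (by linarith : (0:ℝ) ≤ 1 - X z / B) ht0 (by ring)
    simp only [smul_eq_mul, mul_zero, zero_add, Real.exp_zero, mul_one] at hcvx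
    have harg : X z / B * (lam * B) = lam * X z := by field_simp
    rw [harg] at hcvx
    have : 1 - X z / B + X z / B * Real.exp (lam * B) = 1 + (k / B) * X z := by
      simp only [hk]; field_simp; ring
    linarith [hcvx, this.ge]
  calc ∫⁻ z, ENNReal.ofReal (Real.exp (lam * X z)) ∂P
      ≤ ∫⁻ z, (1 + ENNReal.ofReal (k / B) * ENNReal.ofReal (X z)) ∂P := by
        refine lintegral_mono fun z => ?_
        rw [← ENNReal.ofReal_mul (div_nonneg hk0 hB.le), ← ENNReal.ofReal_one,
          ← ENNReal.ofReal_add zero_le_one (mul_nonneg (div_nonneg hk0 hB.le) (hX0 z))]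
        exact ENNReal.ofReal_le_ofReal (hpt z)
    _ = 1 + ENNReal.ofReal (k / B) * Mh := by
        rw [lintegral_add_left measurable_const, lintegral_const_mul _ hX.ennreal_ofReal]
        simp
        rfl
    _ = ENNReal.ofReal (1 + (k / B) * M) := by
        rw [ENNReal.ofReal_add zero_le_one (by positivity), ENNReal.ofReal_one,
          ENNReal.ofReal_mul (div_nonneg hk0 hB.le), ENNReal.ofReal_toReal hMh_ne]
    _ ≤ ENNReal.ofReal (Real.exp (M * k / B)) := by
        refine ENNReal.ofReal_le_ofReal ?_
        have := Real.add_one_le_exp (M * k / B)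
        have h : (k / B) * M = M * k / B := by ring
        linarith [h.le]
lemma lintegral_pi_prod {Z : Type*} [MeasurableSpace Z] (P : Measure Z) [IsProbabilityMeasure P]
    (g : Z → ℝ≥0∞) (hg : Measurable g) (n : ℕ) :
    ∫⁻ D : Fin n → Z, ∏ i, g (D i) ∂Measure.pi (fun _ => P) = (∫⁻ z, g z ∂P) ^ n := by
  induction n with
  | zero => simp [lintegral_const]
  | succ n ih =>
    have hmp := measurePreserving_piFinSuccAbove (fun _ : Fin (n + 1) => (P : Measure Z)) 0
    set G : Z × (Fin n → Z) → ℝ≥0∞ := fun p => g p.1 * ∏ j, g (p.2 j) with hG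
    have hGmeas : Measurable G :=
      (hg.comp measurable_fst).mul
        (Finset.measurable_prod _ fun j _ => hg.comp ((measurable_pi_apply j).comp measurable_snd))
    have hcomp : ∀ D : Fin (n + 1) → Z,
        G (MeasurableEquiv.piFinSuccAbove (fun _ => Z) 0 D) = ∏ i, g (D i) := by
      intro D
      rw [Fin.prod_univ_succ]
      simp [hG, MeasurableEquiv.piFinSuccAbove, Fin.insertNthEquiv, Fin.succAbove_zero, Fin.tail]
    calc ∫⁻ D : Fin (n + 1) → Z, ∏ i, g (D i) ∂Measure.pi (fun _ => P)
        = ∫⁻ D, G (MeasurableEquiv.piFinSuccAbove (fun _ => Z) 0 D)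
            ∂Measure.pi (fun _ => P) := by
          refine lintegral_congr fun D => (hcomp D).symm
      _ = ∫⁻ p, G p ∂(P.prod (Measure.pi (fun _ : Fin n => P))) := hmp.lintegral_comp hGmeas
      _ = (∫⁻ z, g z ∂P) * ∫⁻ D : Fin n → Z, ∏ j, g (D j) ∂Measure.pi (fun _ => P) := by
          exact lintegral_prod_mul hg.aemeasurable
            (Finset.measurable_prod _ fun j _ => hg.comp (measurable_pi_apply j)).aemeasurable
      _ = (∫⁻ z, g z ∂P) ^ (n + 1) := by rw [ih, pow_succ, mul_comm]

lemma chernoff_bound {Z : Type*} [MeasurableSpace Z] (P : Measure Z) [IsProbabilityMeasure P]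
    (X : Z → ℝ) (hX : Measurable X) (B : ℝ) (hB : 0 < B)
    (hX0 : ∀ z, 0 ≤ X z) (hXB : ∀ z, X z ≤ B)
    (n : ℕ) (s lam : ℝ) (hlam : 0 ≤ lam) :
    Measure.pi (fun _ : Fin n => P) {D | (n : ℝ) * s ≤ ∑ i, X (D i)} ≤
      ENNReal.ofReal (Real.exp (-(lam * (n * s)) +
        n * ((∫⁻ z, ENNReal.ofReal (X z) ∂P).toReal * (Real.exp (lam * B) - 1) / B))) := by
  set M := (∫⁻ z, ENNReal.ofReal (X z) ∂P).toReal with hM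
  set g : Z → ℝ≥0∞ := fun z => ENNReal.ofReal (Real.exp (lam * X z)) with hg
  have hgmeas : Measurable g := ((Real.measurable_exp).comp (hX.const_mul lam)).ennreal_ofReal
  set Fn : (Fin n → Z) → ℝ≥0∞ :=
    fun D => ENNReal.ofReal (Real.exp (lam * ∑ i, X (D i))) with hFn
  have hFnmeas : Measurable Fn := by
    have hsum : Measurable fun D : Fin n → Z => ∑ i, X (D i) :=
      Finset.measurable_sum _ fun i _ => hX.comp (measurable_pi_apply i)
    exact (Real.measurable_exp.comp (hsum.const_mul lam)).ennreal_ofReal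
  have hFn_prod : ∀ D : Fin n → Z, Fn D = ∏ i, g (D i) := by
    intro D
    simp only [hFn, hg, Finset.mul_sum, Real.exp_sum]
    rw [ENNReal.ofReal_prod_of_nonneg fun i _ => (Real.exp_pos _).le]
  have hint : ∫⁻ D, Fn D ∂Measure.pi (fun _ : Fin n => P) = (∫⁻ z, g z ∂P) ^ n := by
    rw [lintegral_congr fun D => hFn_prod D]
    exact lintegral_pi_prod P g hgmeas n
  set ε : ℝ≥0∞ := ENNReal.ofReal (Real.exp (lam * ((n : ℝ) * s))) with hε
  have hε0 : ε ≠ 0 := by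
    simp only [hε, ne_eq, ENNReal.ofReal_eq_zero, not_le]
    exact Real.exp_pos _
  have hεtop : ε ≠ ∞ := ENNReal.ofReal_ne_top
  have hsub : {D : Fin n → Z | (n : ℝ) * s ≤ ∑ i, X (D i)} ⊆ {D | ε ≤ Fn D} := by
    intro D hD
    simp only [Set.mem_setOf_eq] at hD ⊢
    exact ENNReal.ofReal_le_ofReal (Real.exp_le_exp.2 (mul_le_mul_of_nonneg_left hD hlam))
  calc Measure.pi (fun _ : Fin n => P) {D | (n : ℝ) * s ≤ ∑ i, X (D i)}
      ≤ Measure.pi (fun _ : Fin n => P) {D | ε ≤ Fn D} := measure_mono hsub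
    _ = ε⁻¹ * (ε * Measure.pi (fun _ : Fin n => P) {D | ε ≤ Fn D}) := by
        rw [← mul_assoc, ENNReal.inv_mul_cancel hε0 hεtop, one_mul]
    _ ≤ ε⁻¹ * ∫⁻ D, Fn D ∂Measure.pi (fun _ : Fin n => P) :=
        mul_le_mul_right (mul_meas_ge_le_lintegral₀ hFnmeas.aemeasurable ε) _
    _ ≤ ε⁻¹ * ENNReal.ofReal (Real.exp (M * (Real.exp (lam * B) - 1) / B)) ^ n := by
        rw [hint]
        exact mul_le_mul_right
          (pow_le_pow_left' (mgf_bound P X hX B lam hB hlam hX0 hXB) n) _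
    _ = ENNReal.ofReal (Real.exp (-(lam * ((n : ℝ) * s)))) *
          ENNReal.ofReal (Real.exp ((n : ℝ) * (M * (Real.exp (lam * B) - 1) / B))) := by
        rw [← ENNReal.ofReal_pow (Real.exp_pos _).le, ← Real.exp_nat_mul]
        congr 1
        rw [hε, Real.exp_neg, ← ENNReal.ofReal_inv_of_pos (Real.exp_pos _)]
    _ = ENNReal.ofReal (Real.exp (-(lam * ((n : ℝ) * s)) +
          (n : ℝ) * (M * (Real.exp (lam * B) - 1) / B))) := by
        rw [← ENNReal.ofReal_mul (Real.exp_pos _).le, ← Real.exp_add]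
/-- Truncated-loss lower bound. For any loss `ℓ : F × Z → [0,∞)` and any
truncation level `B > 0`, with `Δ_{n,B} ∈ (0,1]` the unique solution of
`−Δ − log(1−Δ) = B log(1/α)/(n R̂(F,D_n;B))` (and `Δ = 1` when `R̂(F,D_n;B) = 0`), the
quantity `(1−Δ_{n,B}) R̂(F,D_n;B)` is a valid distribution-free lower bound on the model
class risk `R_P(F)`. -/
theorem erm_lower_bound_truncated_loss
    {Z F : Type*} [MeasurableSpace Z] [Nonempty F]
    (ℓ : F → Z → ℝ≥0) (hℓmeas : ∀ f : F, Measurable (ℓ f))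
    (α : ℝ) (hα : α ∈ Set.Ioo (0 : ℝ) 1) (n : ℕ) (hn : 1 ≤ n)
    (B : ℝ) (hB : 0 < B)
    (Δ : (Fin n → Z) → ℝ)
    (hΔmem : ∀ D, Δ D ∈ Set.Ioc (0 : ℝ) 1)
    (hΔ1 : ∀ D : Fin n → Z,
      (⨅ f : F, (∑ i, min (ℓ f (D i) : ℝ) B) / n) = 0 → Δ D = 1)
    (hΔeq : ∀ D : Fin n → Z, (⨅ f : F, (∑ i, min (ℓ f (D i) : ℝ) B) / n) ≠ 0 →
      -Δ D - Real.log (1 - Δ D) =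
        B * Real.log (1 / α) / (n * ⨅ f : F, (∑ i, min (ℓ f (D i) : ℝ) B) / n))
    (P : Measure Z) [IsProbabilityMeasure P] :
    ENNReal.ofReal (1 - α) ≤
      Measure.pi (fun _ : Fin n => P)
        {D | ENNReal.ofReal ((1 - Δ D) * (⨅ f : F, (∑ i, min (ℓ f (D i) : ℝ) B) / n))
              ≤ ⨅ f : F, ∫⁻ z, (ℓ f z : ℝ≥0∞) ∂P} := by
  obtain ⟨hα0, hα1⟩ := hα
  have hn0 : (0:ℝ) < n := by exact_mod_cast Nat.lt_of_lt_of_le Nat.zero_lt_one hn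
  have hlogα : 0 < Real.log (1 / α) :=
    Real.log_pos (by rw [lt_div_iff₀ hα0]; linarith)
  have hlog1α : Real.log (1 / α) = -Real.log α := by rw [one_div, Real.log_inv]
  set c : ℝ := B * Real.log (1 / α) / n with hc
  have hc0 : 0 < c := by positivity
  set X : F → Z → ℝ := fun f z => min (ℓ f z : ℝ) B with hXdef
  have hXmeas : ∀ f, Measurable (X f) := fun f =>
    ((hℓmeas f).coe_nnreal_real).min measurable_const
  have hX0 : ∀ f z, 0 ≤ X f z := fun f z => le_min (ℓ f z).coe_nonneg hB.le
  have hXB : ∀ f z, X f z ≤ B := fun f z => min_le_right _ _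
  set Mh : F → ℝ≥0∞ := fun f => ∫⁻ z, ENNReal.ofReal (X f z) ∂P with hMhdef
  have hMh_ne : ∀ f, Mh f ≠ ∞ := by
    intro f
    have hle : Mh f ≤ ENNReal.ofReal B := by
      calc Mh f ≤ ∫⁻ _z, ENNReal.ofReal B ∂P :=
            lintegral_mono fun z => ENNReal.ofReal_le_ofReal (hXB f z)
        _ = ENNReal.ofReal B := by simp
    exact ne_top_of_le_ne_top ENNReal.ofReal_ne_top hle
  set Mr : F → ℝ := fun f => (Mh f).toReal with hMrdef
  have hMr0 : ∀ f, 0 ≤ Mr f := fun f => ENNReal.toReal_nonneg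
  have hbddM : BddBelow (Set.range Mr) := ⟨0, by rintro x ⟨f, rfl⟩; exact hMr0 f⟩
  set m : ℝ := ⨅ f, Mr f with hm
  have hm0 : 0 ≤ m := le_ciInf hMr0
  set r : (Fin n → Z) → ℝ := fun D => ⨅ f, (∑ i, X f (D i)) / n with hrdef
  have hbddr : ∀ D : Fin n → Z, BddBelow (Set.range fun f => (∑ i, X f (D i)) / n) := by
    intro D
    refine ⟨0, ?_⟩
    rintro x ⟨f, rfl⟩
    exact div_nonneg (Finset.sum_nonneg fun i _ => hX0 f (D i)) hn0.le
  have hr0 : ∀ D : Fin n → Z, 0 ≤ r D := fun D =>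
    le_ciInf fun f => div_nonneg (Finset.sum_nonneg fun i _ => hX0 f (D i)) hn0.le
  have hrle : ∀ (f : F) (D : Fin n → Z), r D ≤ (∑ i, X f (D i)) / n := fun f D => ciInf_le (hbddr D) f
  set μn := Measure.pi (fun _ : Fin n => P) with hμn
  set Q := ⨅ f : F, ∫⁻ z, (ℓ f z : ℝ≥0∞) ∂P with hQdef
  have hQ : ENNReal.ofReal m ≤ Q := by
    refine le_iInf fun f => ?_
    calc ENNReal.ofReal m ≤ ENNReal.ofReal (Mr f) :=
          ENNReal.ofReal_le_ofReal (ciInf_le hbddM f)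
      _ = Mh f := ENNReal.ofReal_toReal (hMh_ne f)
      _ ≤ ∫⁻ z, (ℓ f z : ℝ≥0∞) ∂P := by
          refine lintegral_mono fun z => ?_
          calc ENNReal.ofReal (X f z) ≤ ENNReal.ofReal ((ℓ f z : ℝ)) :=
                ENNReal.ofReal_le_ofReal (min_le_left _ _)
            _ = ((ℓ f z : ℝ≥0) : ℝ≥0∞) := ENNReal.ofReal_coe_nnreal
  have key : ∀ ε : ℝ, 0 < ε →
      μn {D | m + ε < (1 - Δ D) * r D} ≤ ENNReal.ofReal α := by
    intro ε hε
    have hV0 : 0 < m + ε := by linarith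
    obtain ⟨f₀, hf₀⟩ : ∃ f, Mr f < m + ε :=
      exists_lt_of_ciInf_lt (lt_add_of_pos_right m hε)
    obtain ⟨δ, s, hδmem, hδs, hδeq, hVs⟩ := exists_solution c (m + ε) hc0 hV0
    have hs0 : 0 < s := lt_trans hV0 hVs
    have h1δ : 0 < 1 - δ := by linarith [hδmem.2]
    set lam := Real.log (s / (m + ε)) / B with hlamdef
    have hsV1 : 1 < s / (m + ε) := (one_lt_div hV0).2 hVs
    have hlam0 : 0 < lam := div_pos (Real.log_pos hsV1) hB
    have hincl : {D : Fin n → Z | m + ε < (1 - Δ D) * r D} ⊆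
        {D | (n:ℝ) * s ≤ ∑ i, X f₀ (D i)} := by
      intro D hD
      simp only [Set.mem_setOf_eq] at hD ⊢
      by_contra hcon
      push_neg at hcon
      have hrs : r D ≤ s := by
        have h1 : r D ≤ (∑ i, X f₀ (D i)) / n := hrle f₀ D
        have h2 : (∑ i, X f₀ (D i)) / n ≤ s := by
          rw [div_le_iff₀ hn0]
          nlinarith [hcon.le]
        linarith
      have hfin : (1 - Δ D) * r D ≤ m + ε := by
        rcases eq_or_lt_of_le (hr0 D) with h0 | hpos
        · rw [← h0, mul_zero]
          exact hV0.le
        · have hΔlt : Δ D < 1 := by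
            by_contra hge
            push_neg at hge
            have h1 : Δ D = 1 := le_antisymm (hΔmem D).2 hge
            have h2 := hΔeq D hpos.ne'
            rw [show (⨅ f : F, (∑ i, min ((ℓ f (D i) : ℝ)) B) / (n:ℝ)) = r D from rfl,
              h1, sub_self, Real.log_zero, sub_zero] at h2
            have hRpos : 0 < B * Real.log (1 / α) / ((n : ℝ) * r D) := by positivity
            linarith
          have heq : -Δ D - Real.log (1 - Δ D) = c / r D := by
            have h := hΔeq D hpos.ne'
            rw [h, hc, div_div]
          have hle : c / s ≤ c / r D := by
            apply div_le_div_of_nonneg_left hc0.le hpos hrs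
          have hδΔ : δ ≤ Δ D := by
            by_contra hlt
            push_neg at hlt
            have h2 : -Δ D - Real.log (1 - Δ D) < -δ - Real.log (1 - δ) :=
              hfun_strictMonoOn ⟨(hΔmem D).1.le, hΔlt⟩ ⟨hδmem.1.le, hδmem.2⟩ hlt
            rw [heq, hδeq] at h2
            linarith
          have hmul : (1 - Δ D) * r D ≤ (1 - δ) * s :=
            mul_le_mul (by linarith) hrs (hr0 D) (by linarith)
          rw [hδs] at hmul
          exact hmul
      linarith
    have hk0 : (0:ℝ) ≤ Real.exp (lam * B) - 1 := by
      have := Real.one_le_exp (mul_nonneg hlam0.le hB.le)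
      linarith
    have hexp : Real.exp (lam * B) = s / (m + ε) := by
      rw [hlamdef, div_mul_cancel₀ _ hB.ne', Real.exp_log (by positivity)]
    have hlogsV : Real.log (s / (m + ε)) = -Real.log (1 - δ) := by
      have h1 : s / (m + ε) = (1 - δ)⁻¹ := by
        rw [← hδs]
        field_simp
      rw [h1, Real.log_inv]
    have hcs : (-δ - Real.log (1 - δ)) * s = c := (eq_div_iff hs0.ne').1 hδeq
    have hnc : (n:ℝ) * c = B * Real.log (1 / α) := by
      rw [hc]; field_simp
    have hE : -(lam * ((n:ℝ) * s)) +
        (n:ℝ) * ((m + ε) * (Real.exp (lam * B) - 1) / B) = Real.log α := by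
      rw [hexp, hlamdef, hlogsV]
      have e1 : (m + ε) * (s / (m + ε) - 1) = s - (m + ε) := by field_simp
      rw [e1]
      have e2 : s - (m + ε) = δ * s := by linear_combination hδs
      rw [e2]
      have h3 : -(-Real.log (1 - δ) / B * ((n:ℝ) * s)) + (n:ℝ) * (δ * s / B) =
          -((n:ℝ) / B) * ((-δ - Real.log (1 - δ)) * s) := by ring
      rw [h3, hcs]
      have h4 : -((n:ℝ) / B) * c = -((n:ℝ) * c) / B := by ring
      rw [h4, hnc, hlog1α]
      field_simp
    calc μn {D | m + ε < (1 - Δ D) * r D}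
        ≤ μn {D | (n:ℝ) * s ≤ ∑ i, X f₀ (D i)} := measure_mono hincl
      _ ≤ ENNReal.ofReal (Real.exp (-(lam * ((n:ℝ) * s)) +
            (n:ℝ) * (Mr f₀ * (Real.exp (lam * B) - 1) / B))) :=
          chernoff_bound P (X f₀) (hXmeas f₀) B hB (hX0 f₀) (hXB f₀) n s lam hlam0.le
      _ ≤ ENNReal.ofReal (Real.exp (-(lam * ((n:ℝ) * s)) +
            (n:ℝ) * ((m + ε) * (Real.exp (lam * B) - 1) / B))) := by
          refine ENNReal.ofReal_le_ofReal (Real.exp_le_exp.2 (add_le_add_right ?_ _))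
          refine mul_le_mul_of_nonneg_left ?_ hn0.le
          rw [div_eq_mul_inv, div_eq_mul_inv]
          exact mul_le_mul_of_nonneg_right
            (mul_le_mul_of_nonneg_right hf₀.le hk0) (inv_nonneg.2 hB.le)
      _ = ENNReal.ofReal α := by
          rw [hE, Real.exp_log hα0]
  set A := {D : Fin n → Z | ENNReal.ofReal ((1 - Δ D) * r D) ≤ Q} with hA
  set T : ℕ → Set (Fin n → Z) := fun k => {D | m + 1/((k:ℝ)+1) < (1 - Δ D) * r D} with hT
  have hTmono : Monotone T := by
    intro k k' hkk D hD
    simp only [hT, Set.mem_setOf_eq] at hD ⊢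
    have hkc : ((k:ℝ)+1) ≤ ((k':ℝ)+1) := by
      have : (k:ℝ) ≤ (k':ℝ) := by exact_mod_cast hkk
      linarith
    have : (1:ℝ)/((k':ℝ)+1) ≤ 1/((k:ℝ)+1) :=
      one_div_le_one_div_of_le (by positivity) hkc
    linarith
  have hAc : Aᶜ ⊆ ⋃ k, T k := by
    intro D hD
    simp only [Set.mem_compl_iff, hA, Set.mem_setOf_eq, not_le] at hD
    by_contra hnot
    simp only [Set.mem_iUnion, not_exists, hT, Set.mem_setOf_eq, not_lt] at hnot
    have hle : (1 - Δ D) * r D ≤ m := by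
      refine le_of_forall_pos_le_add ?_
      intro ε hε
      obtain ⟨k, hk⟩ := exists_nat_one_div_lt hε
      exact le_trans (hnot k) (by push_cast at hk ⊢; linarith)
    exact absurd (le_trans (ENNReal.ofReal_le_ofReal hle) hQ) (not_le.2 hD)
  have hμAc : μn Aᶜ ≤ ENNReal.ofReal α := by
    calc μn Aᶜ ≤ μn (⋃ k, T k) := measure_mono hAc
      _ = ⨆ k, μn (T k) := hTmono.measure_iUnion
      _ ≤ ENNReal.ofReal α := iSup_le fun k => key (1/((k:ℝ)+1)) (by positivity)
  have h1 : (1:ℝ≥0∞) ≤ μn A + ENNReal.ofReal α := by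
    calc (1:ℝ≥0∞) = μn Set.univ := measure_univ.symm
      _ = μn (A ∪ Aᶜ) := by rw [Set.union_compl_self]
      _ ≤ μn A + μn Aᶜ := measure_union_le _ _
      _ ≤ μn A + ENNReal.ofReal α := add_le_add_right hμAc _
  have hgoal : ENNReal.ofReal (1 - α) ≤ μn A := by
    rw [show ENNReal.ofReal (1 - α) = 1 - ENNReal.ofReal α by
      rw [ENNReal.ofReal_sub _ hα0.le, ENNReal.ofReal_one]]
    exact tsub_le_iff_right.2 h1
  exact hgoal
end

section
/- Let s > 0 and c > 0, and let Δ ∈ (0,1) be the unique solution of −Δ − log(1−Δ) = c/s. Then (1−Δ)s ≥ s − √(2cs). (In particular, with c = B log(1/α)/n and s = R̂(F,D_n), the lower bound (1−Δ_n)R̂(F,D_n) of the bounded-loss construction satisfies (1−Δ_n)R̂(F,D_n) ≥ R̂(F,D_n) − √(R̂(F,D_n) · 2B log(1/α)/n).) -/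
lemma key_ineq (x : ℝ) (h0 : 0 ≤ x) (h1 : x < 1) :
    x ^ 2 / 2 ≤ -x - Real.log (1 - x) := by
  set f : ℝ → ℝ := fun y => -y - Real.log (1 - y) - y ^ 2 / 2 with hf
  have hmono : MonotoneOn f (Set.Ico 0 1) := by
    apply monotoneOn_of_deriv_nonneg (convex_Ico 0 1)
    · apply ContinuousOn.sub
      apply ContinuousOn.sub
      · exact continuousOn_neg
      · apply ContinuousOn.log (by fun_prop)
        intro y hy
        simp only [Set.mem_Ico] at hy
        linarith
      · fun_prop
    · apply DifferentiableOn.sub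
      apply DifferentiableOn.sub
      · fun_prop
      · apply DifferentiableOn.log (by fun_prop)
        intro y hy
        rw [interior_Ico] at hy
        simp only [Set.mem_Ioo] at hy
        intro h; linarith [h, hy.2]
      · fun_prop
    · intro y hy
      rw [interior_Ico] at hy
      obtain ⟨hy0, hy1⟩ := hy
      have hne : (1 : ℝ) - y ≠ 0 := by intro h; linarith
      have hd : HasDerivAt f (-1 - (-1) / (1 - y) - y) y := by
        have h1 : HasDerivAt (fun y : ℝ => 1 - y) (-1) y := by
          simpa using (hasDerivAt_id y).const_sub 1
        have h2 : HasDerivAt (fun y : ℝ => Real.log (1 - y)) ((-1) / (1 - y)) y :=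
          h1.log hne
        have h3 : HasDerivAt (fun y : ℝ => -y) (-1) y := (hasDerivAt_id y).neg
        have h4 : HasDerivAt (fun y : ℝ => y ^ 2 / 2) y y := by
          simpa using ((hasDerivAt_pow 2 y).div_const 2)
        exact (h3.sub h2).sub h4
      rw [hd.deriv]
      have : -1 - (-1) / (1 - y) - y = y ^ 2 / (1 - y) := by
        field_simp; ring
      rw [this]
      apply div_nonneg (by positivity); linarith
  have h := hmono (Set.mem_Ico.mpr ⟨le_refl 0, one_pos⟩) (Set.mem_Ico.mpr ⟨h0, h1⟩) h0
  simpa [hf] using h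

/-- If `Δ ∈ (0,1)` solves `−Δ − log(1−Δ) = c/s` for `s, c > 0`, then
`(1−Δ)s ≥ s − √(2cs)`. -/
theorem one_sub_delta_mul_ge
    (s c Δ : ℝ) (hs : 0 < s) (hc : 0 < c) (hΔ : Δ ∈ Set.Ioo (0 : ℝ) 1)
    (heq : -Δ - Real.log (1 - Δ) = c / s) :
    s - Real.sqrt (2 * c * s) ≤ (1 - Δ) * s := by
  obtain ⟨h0, h1⟩ := hΔ
  have hkey : Δ ^ 2 / 2 ≤ c / s := heq ▸ key_ineq Δ h0.le h1
  have hsq : (Δ * s) ^ 2 ≤ 2 * c * s := by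
    have h2 : Δ ^ 2 * s ≤ 2 * c := by
      rw [div_le_div_iff₀ (by norm_num) hs] at hkey; nlinarith
    nlinarith
  have hΔs : Δ * s ≤ Real.sqrt (2 * c * s) := by
    calc Δ * s = Real.sqrt ((Δ * s) ^ 2) := by
          rw [Real.sqrt_sq (by positivity)]
      _ ≤ Real.sqrt (2 * c * s) := Real.sqrt_le_sqrt hsq
  nlinarith [hΔs]
end

section
/- Let Z_1, …, Z_n be independent random variables taking values in [0,1]. Denote S = ∑_{i=1}^n Z_i and μ = E[S]. Fix α ∈ (0,1) and let Δ ∈ (0,1] be the unique (random) solution to −Δ − log(1−Δ) = log(1/α)/S (with Δ = 1 when S = 0). Then P( (1−Δ)S ≤ μ ) ≥ 1 − α. -/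
open MeasureTheory ProbabilityTheory
open scoped ENNReal NNReal BigOperators

/-- Empirical multiplicative Chernoff bound. Let `Z_1,…,Z_n` be
independent `[0,1]`-valued random variables, `S = ∑ Z_i`, `μ = E[S]`, and let
`Δ ∈ (0,1]` be the unique (random) solution to `−Δ − log(1−Δ) = log(1/α)/S` (with
`Δ = 1` when `S = 0`). Then `P((1−Δ)S ≤ μ) ≥ 1 − α`. -/
theorem empirical_multiplicative_chernoff
    {Ω : Type*} [MeasurableSpace Ω] (P : Measure Ω) [IsProbabilityMeasure P]
    (n : ℕ) (Z : Fin n → Ω → ℝ) (hmeas : ∀ i, Measurable (Z i))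
    (hrange : ∀ i ω, Z i ω ∈ Set.Icc (0 : ℝ) 1)
    (hindep : iIndepFun Z P)
    (α : ℝ) (hα : α ∈ Set.Ioo (0 : ℝ) 1)
    (Δ : Ω → ℝ) (hΔmem : ∀ ω, Δ ω ∈ Set.Ioc (0 : ℝ) 1)
    (hΔ1 : ∀ ω, (∑ i, Z i ω) = 0 → Δ ω = 1)
    (hΔeq : ∀ ω, (∑ i, Z i ω) ≠ 0 →
      -Δ ω - Real.log (1 - Δ ω) = Real.log (1 / α) / (∑ i, Z i ω)) :
    ENNReal.ofReal (1 - α) ≤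
      P {ω | (1 - Δ ω) * (∑ i, Z i ω) ≤ ∫ ω', (∑ i, Z i ω') ∂P} := by
  obtain ⟨hα0, hα1⟩ := hα
  set S : Ω → ℝ := fun ω => ∑ i, Z i ω with hSdef
  have hSmeas : Measurable S := Finset.measurable_sum _ fun i _ => hmeas i
  have hSnn : ∀ ω, 0 ≤ S ω := fun ω => Finset.sum_nonneg fun i _ => (hrange i ω).1
  have hSleN : ∀ ω, S ω ≤ n := fun ω => by
    calc S ω ≤ ∑ _i : Fin n, (1 : ℝ) := Finset.sum_le_sum fun i _ => (hrange i ω).2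
    _ = n := by simp
  have hZint : ∀ i, Integrable (Z i) P := fun i =>
    (integrable_const (1 : ℝ)).mono' (hmeas i).aestronglyMeasurable
      (Filter.Eventually.of_forall fun ω => by
        rw [Real.norm_eq_abs, abs_of_nonneg (hrange i ω).1]; exact (hrange i ω).2)
  have hSint : Integrable S P := integrable_finset_sum _ fun i _ => hZint i
  set m : ℝ := ∫ ω, S ω ∂P with hm
  have hm0 : 0 ≤ m := integral_nonneg fun ω => hSnn ω
  have hgoalset : {ω | (1 - Δ ω) * (∑ i, Z i ω) ≤ ∫ ω', (∑ i, Z i ω') ∂P}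
      = {ω | (1 - Δ ω) * S ω ≤ m} := rfl
  rw [hgoalset]
  -- It suffices to bound the probability of the "bad" event.
  suffices hbad : P {ω | m < (1 - Δ ω) * S ω} ≤ ENNReal.ofReal α by
    have hcompl : {ω | (1 - Δ ω) * S ω ≤ m}ᶜ = {ω | m < (1 - Δ ω) * S ω} := by
      ext ω; simp [not_le]
    have h1 : (1 : ℝ≥0∞) ≤ P {ω | (1 - Δ ω) * S ω ≤ m} + P {ω | m < (1 - Δ ω) * S ω} := by
      rw [← hcompl]
      calc (1 : ℝ≥0∞) = P Set.univ := (measure_univ).symm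
      _ ≤ P ({ω | (1 - Δ ω) * S ω ≤ m} ∪ {ω | (1 - Δ ω) * S ω ≤ m}ᶜ) :=
        measure_mono (by simp)
      _ ≤ _ := measure_union_le _ _
    have h2 : ENNReal.ofReal (1 - α) + ENNReal.ofReal α = 1 := by
      rw [← ENNReal.ofReal_add (by linarith) hα0.le]
      norm_num
    have h3 : ENNReal.ofReal (1 - α) + ENNReal.ofReal α
        ≤ P {ω | (1 - Δ ω) * S ω ≤ m} + ENNReal.ofReal α := by
      rw [h2]
      exact h1.trans (add_le_add (le_refl _) hbad)
    exact (ENNReal.add_le_add_iff_right ENNReal.ofReal_ne_top).mp h3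
  rcases eq_or_lt_of_le hm0 with hmz | hmpos
  · -- case `m = 0`: then `S = 0` a.e. and the bad event is null.
    have hae : ∀ᵐ ω ∂P, S ω = 0 :=
      (integral_eq_zero_iff_of_nonneg (fun ω => hSnn ω) hSint).mp hmz.symm
    have hnull : P {ω | S ω ≠ 0} = 0 := by
      rw [ae_iff] at hae
      simpa using hae
    have hsub : {ω | m < (1 - Δ ω) * S ω} ⊆ {ω | S ω ≠ 0} := by
      intro ω hω
      simp only [Set.mem_setOf_eq] at hω ⊢
      intro hs
      rw [hs, mul_zero] at hω
      exact absurd hω (not_lt.mpr hm0)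
    calc P {ω | m < (1 - Δ ω) * S ω} ≤ P {ω | S ω ≠ 0} := measure_mono hsub
    _ = 0 := hnull
    _ ≤ ENNReal.ofReal α := zero_le
  · -- case `0 < m`
    set L : ℝ := Real.log (1 / α) with hL
    have hLpos : 0 < L := by
      rw [hL, one_div, Real.log_inv]
      linarith [Real.log_neg hα0 hα1]
    set M : ℝ := m * Real.exp (1 + L / m) with hM
    have hexp1 : 1 ≤ Real.exp (1 + L / m) := Real.one_le_exp (by positivity)
    have hmM : m ≤ M := by nlinarith
    have hcont : ContinuousOn (fun x => x * Real.log (x / m) - x + m) (Set.Icc m M) := by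
      apply ContinuousOn.add _ continuousOn_const
      apply ContinuousOn.sub _ continuousOn_id
      exact continuousOn_id.mul (ContinuousOn.log (continuousOn_id.div_const m)
        (fun x hx => ne_of_gt (div_pos (lt_of_lt_of_le hmpos hx.1) hmpos)))
    have hgm : m * Real.log (m / m) - m + m = 0 := by
      rw [div_self hmpos.ne']; simp
    have hlogM : Real.log (M / m) = 1 + L / m := by
      rw [hM, mul_comm, mul_div_assoc, div_self hmpos.ne', mul_one, Real.log_exp]
    have hgM : L ≤ M * Real.log (M / m) - M + m := by
      rw [hlogM]
      have h4 : L ≤ M * L / m := by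
        rw [le_div_iff₀ hmpos]; nlinarith
      have h5 : M * (1 + L / m) = M + M * L / m := by ring
      linarith
    obtain ⟨a, haIcc, hga0⟩ := intermediate_value_Icc hmM hcont ⟨by rw [hgm]; exact hLpos.le, hgM⟩
    have hga : a * Real.log (a / m) - a + m = L := hga0
    have ham : m < a := by
      rcases eq_or_lt_of_le haIcc.1 with h | h
      · exfalso
        rw [← h] at hga
        rw [hgm] at hga
        linarith
      · exact h
    have hapos : 0 < a := hmpos.trans ham
    set t : ℝ := Real.log (a / m) with hT
    have htpos : 0 < t := Real.log_pos ((one_lt_div hmpos).mpr ham)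
    have hexpt : Real.exp t = a / m := Real.exp_log (div_pos hapos hmpos)
    -- integrability of exponentials
    have hintZ : ∀ i, Integrable (fun ω => Real.exp (t * Z i ω)) P := fun i =>
      (integrable_const (Real.exp t)).mono' ((hmeas i).const_mul t).exp.aestronglyMeasurable
        (Filter.Eventually.of_forall fun ω => by
          rw [Real.norm_eq_abs, abs_of_pos (Real.exp_pos _), Real.exp_le_exp]
          nlinarith [(hrange i ω).1, (hrange i ω).2, htpos])
    have hintS : Integrable (fun ω => Real.exp (t * S ω)) P :=
      (integrable_const (Real.exp (t * n))).mono' ((hSmeas.const_mul t).exp).aestronglyMeasurable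
        (Filter.Eventually.of_forall fun ω => by
          rw [Real.norm_eq_abs, abs_of_pos (Real.exp_pos _), Real.exp_le_exp]
          exact mul_le_mul_of_nonneg_left (hSleN ω) htpos.le)
    -- per-coordinate mgf bound
    have hmgfZ : ∀ i, mgf (Z i) P t ≤ Real.exp ((Real.exp t - 1) * ∫ ω, Z i ω ∂P) := by
      intro i
      have hptw : ∀ ω, Real.exp (t * Z i ω) ≤ 1 + (Real.exp t - 1) * Z i ω := by
        intro ω
        obtain ⟨h0, h1⟩ := hrange i ω
        have h := convexOn_exp.2 (Set.mem_univ t) (Set.mem_univ (0 : ℝ)) h0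
          (by linarith : (0:ℝ) ≤ 1 - Z i ω) (by ring)
        simp only [smul_eq_mul, mul_zero, add_zero, Real.exp_zero, mul_one] at h
        calc Real.exp (t * Z i ω) = Real.exp (Z i ω * t) := by rw [mul_comm]
        _ ≤ Z i ω * Real.exp t + (1 - Z i ω) := h
        _ = 1 + (Real.exp t - 1) * Z i ω := by ring
      calc mgf (Z i) P t = ∫ ω, Real.exp (t * Z i ω) ∂P := rfl
      _ ≤ ∫ ω, (1 + (Real.exp t - 1) * Z i ω) ∂P :=
        integral_mono (hintZ i) ((integrable_const 1).add ((hZint i).const_mul _))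
          hptw
      _ = 1 + (Real.exp t - 1) * ∫ ω, Z i ω ∂P := by
        rw [integral_add (integrable_const 1) ((hZint i).const_mul _), integral_const,
          integral_const_mul]
        simp
      _ ≤ Real.exp ((Real.exp t - 1) * ∫ ω, Z i ω ∂P) := by
        linarith [Real.add_one_le_exp ((Real.exp t - 1) * ∫ ω, Z i ω ∂P)]
    -- mgf of the sum
    have hSfun : S = ∑ i, Z i := by
      funext ω
      rw [hSdef]
      simp [Finset.sum_apply]
    have hmsum : mgf S P t = ∏ i, mgf (Z i) P t := by
      rw [hSfun]
      exact hindep.mgf_sum hmeas Finset.univ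
    have hmint : m = ∑ i, ∫ ω, Z i ω ∂P := by
      rw [hm, hSdef]
      exact integral_finset_sum _ fun i _ => hZint i
    have hmgfS : mgf S P t ≤ Real.exp ((Real.exp t - 1) * m) := by
      rw [hmsum]
      calc ∏ i, mgf (Z i) P t ≤ ∏ i, Real.exp ((Real.exp t - 1) * ∫ ω, Z i ω ∂P) :=
        Finset.prod_le_prod (fun i _ => mgf_nonneg) (fun i _ => hmgfZ i)
      _ = Real.exp (∑ i, (Real.exp t - 1) * ∫ ω, Z i ω ∂P) := (Real.exp_sum _ _).symm
      _ = Real.exp ((Real.exp t - 1) * m) := by rw [← Finset.mul_sum, ← hmint]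
    -- Chernoff bound
    have hval : (Real.exp t - 1) * m - t * a = -L := by
      rw [hexpt, sub_mul, div_mul_cancel₀ _ hmpos.ne']
      linear_combination -hga
    have hexpL : Real.exp (-L) = α := by
      rw [hL, one_div, Real.log_inv, neg_neg, Real.exp_log hα0]
    have hcher : (P {ω | a ≤ S ω}).toReal ≤ α := by
      calc (P {ω | a ≤ S ω}).toReal ≤ Real.exp (-t * a) * mgf S P t :=
        measure_ge_le_exp_mul_mgf a htpos.le hintS
      _ ≤ Real.exp (-t * a) * Real.exp ((Real.exp t - 1) * m) := by
        exact mul_le_mul_of_nonneg_left hmgfS (Real.exp_pos _).le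
      _ = Real.exp ((Real.exp t - 1) * m - t * a) := by
        rw [← Real.exp_add]; ring_nf
      _ = α := by rw [hval, hexpL]
    have hPa : P {ω | a ≤ S ω} ≤ ENNReal.ofReal α := by
      rw [← ENNReal.ofReal_toReal (measure_ne_top P _)]
      exact ENNReal.ofReal_le_ofReal hcher
    -- the bad event is contained in {a ≤ S}
    have hsub : {ω | m < (1 - Δ ω) * S ω} ⊆ {ω | a ≤ S ω} := by
      intro ω hω
      simp only [Set.mem_setOf_eq] at hω ⊢
      by_contra hlt
      push_neg at hlt
      obtain ⟨hd0, hd1⟩ := hΔmem ω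
      have hS0 : 0 < S ω := by
        rcases eq_or_lt_of_le (hSnn ω) with h | h
        · exfalso
          rw [← h, mul_zero] at hω
          exact absurd hω (not_lt.mpr hmpos.le)
        · exact h
      have hdlt1 : Δ ω < 1 := by
        rcases lt_or_eq_of_le hd1 with h | h
        · exact h
        · exfalso
          have heq := hΔeq ω hS0.ne'
          rw [h] at heq
          norm_num [Real.log_zero] at heq
          have h9 := div_pos hLpos hS0
          linarith [heq]
      have heq := hΔeq ω hS0.ne'
      have h1d : 0 < 1 - Δ ω := by linarith
      have hkey : S ω * (-Δ ω - Real.log (1 - Δ ω)) = L := by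
        rw [heq, mul_comm, div_mul_cancel₀ _ hS0.ne']
      set τ : ℝ := -Real.log (1 - Δ ω) with hτ
      have hτpos : 0 < τ := by
        have := Real.log_neg h1d (by linarith)
        rw [hτ]; linarith
      have hexpτ : Real.exp τ = (1 - Δ ω)⁻¹ := by
        rw [hτ, Real.exp_neg, Real.exp_log h1d]
      have hkey' : S ω * τ - Δ ω * S ω = L := by
        rw [← hkey]; ring
      have heτ : Real.exp τ - 1 = Δ ω / (1 - Δ ω) := by
        rw [hexpτ]; field_simp; ring
      have hstep1 : L < S ω * τ - (Real.exp τ - 1) * m := by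
        have h2 : Δ ω / (1 - Δ ω) * m < Δ ω / (1 - Δ ω) * ((1 - Δ ω) * S ω) :=
          mul_lt_mul_of_pos_left hω (div_pos hd0 h1d)
        have h3 : Δ ω / (1 - Δ ω) * ((1 - Δ ω) * S ω) = Δ ω * S ω := by
          field_simp
        rw [heτ]
        linarith
      have hstep2 : S ω * τ - (Real.exp τ - 1) * m ≤ a * τ - (Real.exp τ - 1) * m := by
        have := mul_le_mul_of_nonneg_right hlt.le hτpos.le
        linarith
      have hstep3 : a * τ - (Real.exp τ - 1) * m ≤ L := by
        have hu := Real.add_one_le_exp (τ - t)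
        have hexpu : Real.exp (τ - t) = Real.exp τ * m / a := by
          rw [Real.exp_sub, hexpt]
          field_simp
        have h4 : a * (τ - t + 1) ≤ a * Real.exp (τ - t) :=
          mul_le_mul_of_nonneg_left hu hapos.le
        rw [hexpu] at h4
        have h5 : a * (Real.exp τ * m / a) = Real.exp τ * m := by
          field_simp
        rw [h5] at h4
        have h6 : a * (τ - t + 1) = a * τ - a * t + a := by ring
        have h7 : (Real.exp τ - 1) * m = Real.exp τ * m - m := by ring
        linarith [h4, h6, h7, hga]
      linarith
    calc P {ω | m < (1 - Δ ω) * S ω} ≤ P {ω | a ≤ S ω} := measure_mono hsub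
    _ ≤ ENNReal.ofReal α := hPa
end

section
/- Fix α ∈ (0,1), n ≥ d ≥ 1, and B > 0, and consider the class F_lin^(d) of linear predictors under squared loss, with the truncated-loss lower bound L̂^{ERM-trunc,B}_α(F_lin^(d), D_n) := (1 − Δ_{n,B}) R̂(F_lin^(d), D_n; B), where Δ_{n,B} ∈ (0,1] is the unique solution of −Δ_{n,B} − log(1−Δ_{n,B}) = B log(1/α)/( n R̂(F_lin^(d), D_n; B) ). Let D_n = ((X_1,Y_1),…,(X_n,Y_n)) ∈ (ℝ^d × ℝ)^n be any dataset satisfying, for some γ, λ_0, λ_1 > 0: (1/n)∑_{i=1}^n Y_i^4 ≤ γ, and for all b ∈ ℝ^d, (1/n)∑_{i=1}^n (X_iᵀb)² ≥ λ_0 ‖b‖₂² and (1/n)∑_{i=1}^n (X_iᵀb)^4 ≤ λ_1 ‖b‖₂^4. Then L̂^{ERM-trunc,B}_α(F_lin^(d), D_n) ≥ (1/n)‖P_X^⊥ Y‖₂² − √(2B² log(1/α)/n) − c/B, where Y = (Y_1,…,Y_n) ∈ ℝ^n, X ∈ ℝ^{n×d} is the matrix with rows X_i, P_X^⊥ is the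 orthogonal projection onto the orthogonal complement of the column span of X, and c = max{ 8γ + 128 γ λ_1 / λ_0², 4 γ λ_1 / λ_0² }. -/
open MeasureTheory
open scoped ENNReal NNReal BigOperators

lemma tl_min_lb1 (a B : ℝ) (hB : 0 < B) : a - a^2/B ≤ min a B := by
  rcases le_total a B with h|h
  · have h2 : 0 ≤ a^2/B := by positivity
    rw [min_eq_left h]; linarith
  · rw [min_eq_right h, sub_le_iff_le_add, ← sub_le_iff_le_add', le_div_iff₀ hB]
    nlinarith [sq_nonneg (a - B)]

lemma tl_min_lb2 (x v B : ℝ) (hv : 0 ≤ v) : min x B - v ≤ min (x - v) B :=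
  le_min (by linarith [min_le_left x B]) (by linarith [min_le_right x B])

lemma tl_log_ineq (x : ℝ) (h0 : 0 ≤ x) (h1 : x < 1) :
    x^2/2 ≤ -x - Real.log (1 - x) := by
  set F : ℝ → ℝ := fun t => -t - t^2/2 - Real.log (1-t) with hF
  have hder : ∀ t ∈ Set.Ico (0:ℝ) 1, HasDerivAt F (-1 - t + 1/(1-t)) t := by
    intro t ht
    have hne : (1:ℝ) - t ≠ 0 := by
      have := ht.2; intro h; linarith [sub_eq_zero.mp h]
    have h1t : HasDerivAt (fun s : ℝ => 1 - s) (-1) t := by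
      simpa using (hasDerivAt_id t).const_sub 1
    have hlog : HasDerivAt (fun s : ℝ => Real.log (1 - s)) ((1-t)⁻¹ * (-1)) t :=
      (Real.hasDerivAt_log hne).comp t h1t
    have hpoly : HasDerivAt (fun s : ℝ => -s - s^2/2) (-1 - t) t := by
      have := ((hasDerivAt_id' t).fun_neg).fun_sub (((hasDerivAt_pow 2 t)).div_const 2)
      exact this.congr_deriv (by norm_num)
    have h' := hpoly.sub hlog
    rw [show (-1 - t + 1/(1-t)) = (-1 - t) - ((1-t)⁻¹*(-1)) by ring]
    exact h'
  have hmono : MonotoneOn F (Set.Icc 0 x) := by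
    apply monotoneOn_of_deriv_nonneg (convex_Icc 0 x)
    · intro t ht
      have ht' : t ∈ Set.Ico (0:ℝ) 1 := ⟨ht.1, lt_of_le_of_lt ht.2 h1⟩
      exact (hder t ht').continuousAt.continuousWithinAt
    · intro t ht
      rw [interior_Icc] at ht
      have ht' : t ∈ Set.Ico (0:ℝ) 1 := ⟨le_of_lt ht.1, lt_trans ht.2 h1⟩
      exact ((hder t ht').differentiableAt).differentiableWithinAt
    · intro t ht
      rw [interior_Icc] at ht
      have ht' : t ∈ Set.Ico (0:ℝ) 1 := ⟨le_of_lt ht.1, lt_trans ht.2 h1⟩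
      rw [(hder t ht').deriv]
      have h1t : 0 < 1 - t := by linarith [ht'.2]
      have : -1 - t + 1/(1-t) = t^2/(1-t) := by field_simp; ring
      rw [this]; positivity
  have h00 : F 0 = 0 := by simp [hF]
  have hx := hmono (Set.left_mem_Icc.mpr h0) (Set.right_mem_Icc.mpr h0) h0
  rw [h00] at hx
  have : F x = -x - x^2/2 - Real.log (1-x) := rfl
  rw [this] at hx
  linarith

lemma tl_le_of_sq_le_sq (a c : ℝ) (hc : 0 ≤ c) (h : a^2 ≤ c^2) : a ≤ c :=
  le_of_pow_le_pow_left₀ two_ne_zero hc (by simpa using h)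

lemma tl_polykey (B g l0 l1 t m2 q nn : ℝ) (hB : 0 < B) (hg : 0 < g)
    (h0 : 0 < l0) (h1 : 0 < l1) (hn : 0 < nn)
    (ht : 4*g ≤ l0*t) (hm : nn*(l0*t) ≤ m2) (hq0 : 0 ≤ q) (hq : q ≤ nn*(l1*t^2)) :
    nn*(2*g*l0^2*B - 128*g^2*l1)*(2*B*m2 + q) ≤ l0^2*B*(B*m2^2) := by
  have htpos : 0 < t := by nlinarith
  have hm2pos : 0 < m2 := lt_of_lt_of_le (by positivity) hm
  have hRHS : 0 ≤ l0^2*B*(B*m2^2) := by positivity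
  rcases le_or_gt (2*g*l0^2*B - 128*g^2*l1) 0 with hE|hE
  · have hL : nn*(2*g*l0^2*B - 128*g^2*l1)*(2*B*m2 + q) ≤ 0 := by
      apply mul_nonpos_of_nonpos_of_nonneg
      · exact mul_nonpos_of_nonneg_of_nonpos hn.le hE
      · positivity
    linarith
  · have step1 : nn*(2*g*l0^2*B - 128*g^2*l1)*(2*B*m2 + q)
        ≤ nn*(2*g*l0^2*B - 128*g^2*l1)*(2*B*m2 + nn*(l1*t^2)) := by
      have hnE : 0 ≤ nn*(2*g*l0^2*B - 128*g^2*l1) := by positivity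
      nlinarith [hnE]
    have hr : 0 ≤ l0*t - 4*g := by linarith
    have hw : 0 ≤ m2 - nn*(l0*t) := by linarith
    have hInner0 : 0 ≤ l0*(l0^4*B^2*t - 2*B*l0*(2*g*l0^2*B - 128*g^2*l1)
        - (2*g*l0^2*B - 128*g^2*l1)*l1*t) := by
      nlinarith [mul_nonneg hr (sq_nonneg (l0^2*B - g*l1)),
        mul_nonneg hr (mul_nonneg (sq_nonneg g) (sq_nonneg l1)),
        mul_pos (mul_pos (mul_pos (mul_pos hg hg) (mul_pos h0 h0)) h1) hB,
        mul_pos (mul_pos (mul_pos hg hg) hg) (mul_pos h1 h1)]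
    have hInner : 0 ≤ l0^4*B^2*t - 2*B*l0*(2*g*l0^2*B - 128*g^2*l1)
        - (2*g*l0^2*B - 128*g^2*l1)*l1*t :=
      (mul_nonneg_iff_of_pos_left h0).mp hInner0
    have hcoef : 0 ≤ l0^3*t*B - (2*g*l0^2*B - 128*g^2*l1) := by
      nlinarith [mul_nonneg hr (by positivity : (0:ℝ) ≤ l0^2*B),
        mul_pos (mul_pos (mul_pos hg hg) h1) hB]
    have step2 : nn*(2*g*l0^2*B - 128*g^2*l1)*(2*B*m2 + nn*(l1*t^2))
        ≤ l0^2*B*(B*m2^2) := by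
      nlinarith [mul_nonneg (mul_nonneg (sq_nonneg nn) htpos.le) hInner,
        mul_nonneg hw (mul_nonneg (by positivity : (0:ℝ) ≤ 2*B*nn) hcoef),
        sq_nonneg (l0*B*(m2 - nn*(l0*t)))]
    linarith

lemma tl_pow4 (a b : ℝ) : ((a - b)^2)^2 ≤ 8*a^4 + 8*b^4 := by
  nlinarith [sq_nonneg (a + b), sq_nonneg (a - b), sq_nonneg (a^2 - b^2), sq_nonneg (a*b),
    sq_nonneg a, sq_nonneg b]

lemma tl_case2pt (u y B : ℝ) (hB : 0 < B) :
    min (u^2/2) B - y^2 ≤ min ((u - y)^2) B := by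
  calc min (u^2/2) B - y^2 ≤ min (u^2/2 - y^2) B := tl_min_lb2 _ _ _ (sq_nonneg _)
    _ ≤ min ((u - y)^2) B := by
        apply min_le_min _ le_rfl
        nlinarith [sq_nonneg (u - 2*y)]

lemma tl_cs_pt (v B : ℝ) (hv : 0 ≤ v) (hB : 0 < B) :
    v ≤ Real.sqrt (min v B) * Real.sqrt (v + v^2/B) := by
  have hminnn : (0:ℝ) ≤ min v B := le_min hv hB.le
  rw [← Real.sqrt_mul hminnn]
  have harg : v^2 ≤ min v B * (v + v^2/B) := by
    rcases le_total v B with h|h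
    · rw [min_eq_left h]
      have : (0:ℝ) ≤ v * (v^2/B) := by positivity
      nlinarith
    · rw [min_eq_right h]
      have hBexp : B * (v + v^2/B) = B*v + v^2 := by field_simp
      rw [hBexp]
      nlinarith [mul_nonneg hB.le hv]
  calc v = Real.sqrt (v^2) := (Real.sqrt_sq hv).symm
    _ ≤ _ := Real.sqrt_le_sqrt harg

lemma tl_case1core (n : ℕ) (u Y : Fin n → ℝ) (g γ lam₀ lam₁ t : ℝ)
    (hn0 : (0:ℝ) < n) (hγ : 0 < γ) (hlam₀ : 0 < lam₀) (hlam₁ : 0 < lam₁)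
    (hg2 : g^2 = γ) (ht0 : 0 ≤ t) (hcase : lam₀*t ≤ 4*g)
    (hqq : ∑ i, u i^4 ≤ (n:ℝ)*(lam₁*t^2)) (hY4' : ∑ i, Y i^4 ≤ (n:ℝ)*γ) :
    ∑ i, ((u i - Y i)^2)^2 ≤ (n:ℝ)*(8*γ + 128*γ*lam₁/lam₀^2) := by
  have hs := Finset.sum_le_sum fun i (_ : i ∈ Finset.univ) => tl_pow4 (u i) (Y i)
  rw [Finset.sum_add_distrib, ← Finset.mul_sum, ← Finset.mul_sum] at hs
  have hlam1t : lam₁*t^2 ≤ 16*γ*lam₁/lam₀^2 := by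
    rw [le_div_iff₀ (by positivity)]
    have h1 : (lam₀*t)^2 ≤ (4*g)^2 := pow_le_pow_left₀ (by positivity) hcase 2
    have h2 := mul_le_mul_of_nonneg_left h1 hlam₁.le
    nlinarith [h2, hg2]
  have h8 : 8*(∑ i, u i^4) ≤ (n:ℝ)*(128*γ*lam₁/lam₀^2) := by
    calc 8*(∑ i, u i^4) ≤ 8*((n:ℝ)*(lam₁*t^2)) := by linarith
      _ ≤ 8*((n:ℝ)*(16*γ*lam₁/lam₀^2)) := by gcongr
      _ = (n:ℝ)*(128*γ*lam₁/lam₀^2) := by ring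
  have h9 : 8*(∑ i, Y i^4) ≤ (n:ℝ)*(8*γ) := by linarith
  calc ∑ i, ((u i - Y i)^2)^2
      ≤ 8*(∑ i, u i^4) + 8*(∑ i, Y i^4) := hs
    _ ≤ (n:ℝ)*(128*γ*lam₁/lam₀^2) + (n:ℝ)*(8*γ) := by linarith
    _ = (n:ℝ)*(8*γ + 128*γ*lam₁/lam₀^2) := by ring

lemma tl_case2core (n : ℕ) (u : Fin n → ℝ) (B g lam₀ lam₁ t : ℝ)
    (hn0 : (0:ℝ) < n) (hB : 0 < B) (hg : 0 < g) (hlam₀ : 0 < lam₀) (hlam₁ : 0 < lam₁)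
    (hcase : 4*g ≤ lam₀*t) (hm2 : (n:ℝ)*(lam₀*t) ≤ ∑ i, u i^2)
    (hqq : ∑ i, u i^4 ≤ (n:ℝ)*(lam₁*t^2)) :
    (n:ℝ)*(2*g) - (n:ℝ)*(128*g^2*lam₁)/(lam₀^2*B) ≤ ∑ i, min (u i^2/2) B := by
  have hcs := Finset.sum_mul_sq_le_sq_mul_sq Finset.univ
    (fun i => Real.sqrt (min (u i^2/2) B))
    (fun i => Real.sqrt (u i^2/2 + (u i^2/2)^2/B))
  have hf2 : ∑ i, (Real.sqrt (min (u i^2/2) B))^2 = ∑ i, min (u i^2/2) B :=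
    Finset.sum_congr rfl fun i _ => Real.sq_sqrt (le_min (by positivity) hB.le)
  have hg2' : ∑ i, (Real.sqrt (u i^2/2 + (u i^2/2)^2/B))^2
      = ∑ i, (u i^2/2 + (u i^2/2)^2/B) :=
    Finset.sum_congr rfl fun i _ => Real.sq_sqrt (by positivity)
  rw [hf2, hg2'] at hcs
  have hsumle : ∑ i, u i^2/2 ≤
      ∑ i, Real.sqrt (min (u i^2/2) B) * Real.sqrt (u i^2/2 + (u i^2/2)^2/B) :=
    Finset.sum_le_sum fun i _ => tl_cs_pt (u i^2/2) B (by positivity) hB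
  have hcs2 : (∑ i, u i^2/2)^2
      ≤ (∑ i, min (u i^2/2) B) * ∑ i, (u i^2/2 + (u i^2/2)^2/B) := by
    calc (∑ i, u i^2/2)^2
        ≤ (∑ i, Real.sqrt (min (u i^2/2) B) * Real.sqrt (u i^2/2 + (u i^2/2)^2/B))^2 := by
          apply pow_le_pow_left₀ (by positivity) hsumle
      _ ≤ _ := hcs
  set m2 : ℝ := ∑ i, u i^2 with hm2def
  set q : ℝ := ∑ i, u i^4 with hqdef
  set M' : ℝ := ∑ i, min (u i^2/2) B with hM'def
  have hq0 : 0 ≤ q := Finset.sum_nonneg fun i _ => by positivity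
  have hM'0 : 0 ≤ M' := Finset.sum_nonneg fun i _ => le_min (by positivity) hB.le
  have hseq1 : ∑ i, u i^2/2 = m2/2 := by rw [hm2def, Finset.sum_div]
  have hseq2 : ∑ i, (u i^2/2 + (u i^2/2)^2/B) = m2/2 + q/(4*B) := by
    have hpt : ∀ i : Fin n, u i^2/2 + (u i^2/2)^2/B = u i^2/2 + u i^4/(4*B) := by
      intro i; ring
    calc ∑ i, (u i^2/2 + (u i^2/2)^2/B) = ∑ i, (u i^2/2 + u i^4/(4*B)) :=
          Finset.sum_congr rfl fun i _ => hpt i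
      _ = (∑ i, u i^2)/2 + (∑ i, u i^4)/(4*B) := by
          rw [Finset.sum_add_distrib, ← Finset.sum_div, ← Finset.sum_div]
      _ = m2/2 + q/(4*B) := by rw [hm2def, hqdef]
  rw [hseq1, hseq2] at hcs2
  have hm2pos : 0 < m2 := by
    have ht' : 0 < t := by nlinarith
    have h0 : (0:ℝ) < (n:ℝ)*(lam₀*t) := by positivity
    linarith
  have hcs3 : B*m2^2 ≤ M'*(2*B*m2 + q) := by
    have h3 := mul_le_mul_of_nonneg_left hcs2 (by positivity : (0:ℝ) ≤ 4*B)
    have h4 : (4*B)*((m2/2)^2) = B*m2^2 := by ring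
    have h5 : (4*B)*(M'*(m2/2 + q/(4*B))) = M'*(2*B*m2+q) := by
      field_simp; ring
    rw [h4, h5] at h3
    exact h3
  have hpoly := tl_polykey B g lam₀ lam₁ t m2 q n hB hg hlam₀ hlam₁ hn0
    hcase hm2 hq0 hqq
  have hpos2 : 0 < 2*B*m2 + q := by positivity
  have h7 : (n:ℝ)*(2*g*lam₀^2*B - 128*g^2*lam₁) ≤ lam₀^2*B*M' := by
    have h6 : (n:ℝ)*(2*g*lam₀^2*B - 128*g^2*lam₁)*(2*B*m2+q)
        ≤ (lam₀^2*B*M')*(2*B*m2+q) := by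
      calc (n:ℝ)*(2*g*lam₀^2*B - 128*g^2*lam₁)*(2*B*m2+q)
          ≤ lam₀^2*B*(B*m2^2) := hpoly
        _ ≤ lam₀^2*B*(M'*(2*B*m2+q)) :=
            mul_le_mul_of_nonneg_left hcs3 (by positivity)
        _ = (lam₀^2*B*M')*(2*B*m2+q) := by ring
    exact le_of_mul_le_mul_right h6 hpos2
  rw [sub_le_iff_le_add, ← sub_le_iff_le_add']
  rw [le_div_iff₀ (by positivity : (0:ℝ) < lam₀^2*B)]
  nlinarith [h7]

set_option maxHeartbeats 1000000 in
/-- Deterministic bound for the truncated-loss lower bound for linear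
models in low dimension. Under fourth-moment and eigenvalue-type conditions on the
dataset, the lower bound `(1−Δ_{n,B}) R̂(F_lin^(d), D_n; B)` is at least
`(1/n)‖P_X^⊥ Y‖² − √(2B² log(1/α)/n) − c/B`. -/
theorem linear_trunc_lower_bound_estimate
    (d n : ℕ) (hd : 1 ≤ d) (hdn : d ≤ n)
    (α B : ℝ) (hα : α ∈ Set.Ioo (0 : ℝ) 1) (hB : 0 < B)
    (X : Fin n → Fin d → ℝ) (Y : Fin n → ℝ)
    (γ lam₀ lam₁ : ℝ) (hγ : 0 < γ) (hlam₀ : 0 < lam₀) (hlam₁ : 0 < lam₁)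
    (hY4 : (∑ i, Y i ^ 4) / n ≤ γ)
    (hlow : ∀ b : Fin d → ℝ, lam₀ * (∑ j, b j ^ 2) ≤ (∑ i, (∑ j, X i j * b j) ^ 2) / n)
    (hhigh : ∀ b : Fin d → ℝ,
      (∑ i, (∑ j, X i j * b j) ^ 4) / n ≤ lam₁ * (∑ j, b j ^ 2) ^ 2)
    (RB : ℝ)
    (hRB : RB = ⨅ β : Fin d → ℝ, (∑ i, min ((∑ j, X i j * β j - Y i) ^ 2) B) / n)
    (Δ : ℝ) (hΔmem : Δ ∈ Set.Ioc (0 : ℝ) 1)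
    (hΔ1 : RB = 0 → Δ = 1)
    (hΔeq : RB ≠ 0 → -Δ - Real.log (1 - Δ) = B * Real.log (1 / α) / (n * RB)) :
    (1 / (n : ℝ)) *
        ‖(Submodule.orthogonalProjectionOnto
            (Submodule.span ℝ
              (Set.range fun j : Fin d =>
                (WithLp.toLp 2 (fun i => X i j) : EuclideanSpace ℝ (Fin n))))ᗮ
            (WithLp.toLp 2 Y : EuclideanSpace ℝ (Fin n)) : EuclideanSpace ℝ (Fin n))‖ ^ 2
      - Real.sqrt (2 * B ^ 2 * Real.log (1 / α) / n)
      - (max (8 * γ + 128 * γ * lam₁ / lam₀ ^ 2) (4 * γ * lam₁ / lam₀ ^ 2)) / B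
    ≤ (1 - Δ) * RB := by
  obtain ⟨hα0, hα1⟩ := hα
  have hn1 : 1 ≤ n := le_trans hd hdn
  have hn0 : (0:ℝ) < n := by exact_mod_cast Nat.lt_of_lt_of_le Nat.zero_lt_one hn1
  have hg : (0:ℝ) < Real.sqrt γ := Real.sqrt_pos.mpr hγ
  set g : ℝ := Real.sqrt γ with hgdef
  have hg2 : g^2 = γ := Real.sq_sqrt hγ.le
  have hL : 0 < Real.log (1 / α) := Real.log_pos (by rw [lt_div_iff₀ hα0]; linarith)
  set cM : ℝ := max (8 * γ + 128 * γ * lam₁ / lam₀ ^ 2) (4 * γ * lam₁ / lam₀ ^ 2) with hcM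
  have hcM1 : 8 * γ + 128 * γ * lam₁ / lam₀ ^ 2 ≤ cM := le_max_left _ _
  have hcMpos : 0 < cM := lt_of_lt_of_le (by positivity) hcM1
  set K : Submodule ℝ (EuclideanSpace ℝ (Fin n)) :=
    Submodule.span ℝ (Set.range fun j : Fin d =>
      (WithLp.toLp 2 (fun i => X i j) : EuclideanSpace ℝ (Fin n))) with hK
  set Y' : EuclideanSpace ℝ (Fin n) := (WithLp.toLp 2 Y : EuclideanSpace ℝ (Fin n)) with hY'
  set PS : ℝ := ‖(Submodule.orthogonalProjectionOnto Kᗮ Y' : EuclideanSpace ℝ (Fin n))‖ ^ 2 with hPS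
  have hnorm2 : ∀ z : EuclideanSpace ℝ (Fin n), ‖z‖^2 = ∑ i, z i ^ 2 := by
    intro z
    rw [EuclideanSpace.norm_eq, Real.sq_sqrt (by positivity)]
    congr 1; funext i; rw [Real.norm_eq_abs, sq_abs]
  have hprojle : ∀ v : EuclideanSpace ℝ (Fin n), v ∈ K → PS ≤ ‖Y' - v‖^2 := by
    intro v hv
    rw [hPS]
    have h1 : ‖(Submodule.orthogonalProjectionOnto Kᗮ Y' : EuclideanSpace ℝ (Fin n))‖ ≤ ‖Y' - v‖ := by
      rw [Submodule.coe_orthogonalProjectionOnto_apply, Submodule.starProjection_orthogonal_val,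
        Submodule.starProjection_minimal]
      exact ciInf_le ⟨0, by rintro x ⟨w, rfl⟩; exact norm_nonneg _⟩ (⟨v, hv⟩ : K)
    exact pow_le_pow_left₀ (norm_nonneg _) h1 2
  have hvmem : ∀ β : Fin d → ℝ,
      (WithLp.toLp 2 (fun i => ∑ j, X i j * β j) : EuclideanSpace ℝ (Fin n)) ∈ K := by
    intro β
    have heq : (WithLp.toLp 2 (fun i => ∑ j, X i j * β j) : EuclideanSpace ℝ (Fin n))
        = ∑ j, β j • (WithLp.toLp 2 (fun i => X i j) : EuclideanSpace ℝ (Fin n)) := by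
      ext i
      simp [mul_comm]
    rw [heq]
    exact Submodule.sum_mem _ fun j _ =>
      Submodule.smul_mem _ _ (Submodule.subset_span ⟨j, rfl⟩)
  -- ∑ Y² ≤ n g
  have hY4' : ∑ i, Y i^4 ≤ n*γ := by
    rw [div_le_iff₀ hn0] at hY4; linarith
  have hY2 : ∑ i, Y i^2 ≤ n*g := by
    apply tl_le_of_sq_le_sq _ _ (by positivity)
    have h := Finset.sum_mul_sq_le_sq_mul_sq Finset.univ (fun _ => (1:ℝ)) (fun i => Y i^2)
    simp only [one_mul, one_pow] at h
    have h1 : (∑ _i : Fin n, (1:ℝ)) = n := by simp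
    have h2 : ∑ i, (Y i^2)^2 = ∑ i, Y i^4 := by
      congr 1; funext i; ring
    rw [h1, h2] at h
    calc (∑ i, Y i^2)^2 ≤ n * ∑ i, Y i^4 := h
      _ ≤ n * (n*γ) := by nlinarith
      _ = (n*g)^2 := by rw [← hg2]; ring
  -- PS ≤ n*g
  have hPSle : PS ≤ n*g := by
    have h0 : PS ≤ ‖Y' - 0‖^2 := hprojle 0 (Submodule.zero_mem K)
    rw [sub_zero, hnorm2] at h0
    exact le_trans h0 hY2
  -- PS ≤ ∑ (u - Y)² for any β
  have hPSQ : ∀ β : Fin d → ℝ, PS ≤ ∑ i, ((∑ j, X i j * β j) - Y i)^2 := by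
    intro β
    have h1 := hprojle _ (hvmem β)
    rw [hnorm2] at h1
    calc PS ≤ ∑ i, (Y' - (WithLp.toLp 2 (fun i => ∑ j, X i j * β j) : EuclideanSpace ℝ (Fin n))) i ^ 2 := h1
      _ = ∑ i, ((∑ j, X i j * β j) - Y i)^2 := by
          apply Finset.sum_congr rfl
          intro i _
          have : (Y' - (WithLp.toLp 2 (fun i => ∑ j, X i j * β j) : EuclideanSpace ℝ (Fin n))) i
              = Y i - ∑ j, X i j * β j := rfl
          rw [this]; ring
  -- Lemma A : per-β lower bound
  have hA : ∀ β : Fin d → ℝ,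
      (1 / (n:ℝ)) * PS - cM/B ≤ (∑ i, min ((∑ j, X i j * β j - Y i) ^ 2) B) / n := by
    intro β
    rw [le_div_iff₀ hn0]
    have hmul : ((1 / (n:ℝ)) * PS - cM/B) * n = PS - cM*n/B := by
      field_simp
    rw [hmul]
    set u : Fin n → ℝ := fun i => ∑ j, X i j * β j with hu
    set t : ℝ := ∑ j, β j ^ 2 with ht
    have ht0 : 0 ≤ t := Finset.sum_nonneg fun j _ => sq_nonneg _
    have hm2 : (n:ℝ)*(lam₀*t) ≤ ∑ i, u i^2 := by
      have := hlow β
      rw [le_div_iff₀ hn0] at this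
      linarith
    have hqq : ∑ i, u i^4 ≤ (n:ℝ)*(lam₁*t^2) := by
      have := hhigh β
      rw [div_le_iff₀ hn0] at this
      linarith
    have hQ : PS ≤ ∑ i, (u i - Y i)^2 := hPSQ β
    show PS - cM*n/B ≤ ∑ i, min ((u i - Y i) ^ 2) B
    rcases le_or_gt (lam₀ * t) (4*g) with hcase|hcase
    · -- Case 1 : small β
      have hsum1 : (∑ i, (u i - Y i)^2) - (∑ i, ((u i - Y i)^2)^2)/B
          ≤ ∑ i, min ((u i - Y i) ^ 2) B := by
        calc (∑ i, (u i - Y i)^2) - (∑ i, ((u i - Y i)^2)^2)/B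
            = ∑ i, ((u i - Y i)^2 - ((u i - Y i)^2)^2/B) := by
              rw [Finset.sum_sub_distrib, Finset.sum_div]
          _ ≤ _ := Finset.sum_le_sum fun i _ => tl_min_lb1 _ _ hB
      have h4 : ∑ i, ((u i - Y i)^2)^2 ≤ (n:ℝ)*cM := by
        calc ∑ i, ((u i - Y i)^2)^2
            ≤ (n:ℝ)*(8*γ + 128*γ*lam₁/lam₀^2) :=
              tl_case1core n u Y g γ lam₀ lam₁ t hn0 hγ hlam₀ hlam₁ hg2 ht0 hcase hqq hY4'
          _ ≤ (n:ℝ)*cM := mul_le_mul_of_nonneg_left hcM1 hn0.le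
      have hdivle : (∑ i, ((u i - Y i)^2)^2)/B ≤ (n:ℝ)*cM/B := by gcongr
      have hcm : (n:ℝ)*cM/B = cM*n/B := by ring
      rw [hcm] at hdivle
      linarith
    · -- Case 2 : large β
      have hsum2 : (∑ i, min (u i^2/2) B) - (∑ i, Y i^2)
          ≤ ∑ i, min ((u i - Y i) ^ 2) B := by
        rw [← Finset.sum_sub_distrib]
        exact Finset.sum_le_sum fun i _ => tl_case2pt (u i) (Y i) B hB
      have h8 := tl_case2core n u B g lam₀ lam₁ t hn0 hB hg hlam₀ hlam₁
        hcase.le hm2 hqq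
      have hcMB : (n:ℝ)*(128*g^2*lam₁)/(lam₀^2*B) ≤ cM*n/B := by
        rw [div_le_div_iff₀ (by positivity) hB]
        have h128 : 128*γ*lam₁/lam₀^2 ≤ cM := by
          have h8γ : (0:ℝ) ≤ 8*γ := by positivity
          linarith [hcM1]
        rw [div_le_iff₀ (by positivity : (0:ℝ) < lam₀^2)] at h128
        rw [hg2]
        have := mul_le_mul_of_nonneg_left h128 (by positivity : (0:ℝ) ≤ (n:ℝ)*B)
        nlinarith [this]
      calc PS - cM*n/B ≤ (n:ℝ)*g - (n:ℝ)*(128*g^2*lam₁)/(lam₀^2*B) := by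
            linarith [hPSle, hcMB]
        _ = ((n:ℝ)*(2*g) - (n:ℝ)*(128*g^2*lam₁)/(lam₀^2*B)) - (n:ℝ)*g := by ring
        _ ≤ (∑ i, min (u i^2/2) B) - ∑ i, Y i^2 := by linarith [h8, hY2]
        _ ≤ _ := hsum2
  -- basic RB facts
  have hbdd : BddBelow (Set.range fun β : Fin d → ℝ =>
      (∑ i, min ((∑ j, X i j * β j - Y i) ^ 2) B) / n) := by
    refine ⟨0, ?_⟩
    rintro x ⟨β, rfl⟩
    apply div_nonneg _ hn0.le
    exact Finset.sum_nonneg fun i _ => le_min (sq_nonneg _) hB.le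
  have hRBlow : (1 / (n:ℝ)) * PS - cM/B ≤ RB := by
    rw [hRB]
    exact le_ciInf hA
  have hRB0 : 0 ≤ RB := by
    rw [hRB]
    apply le_ciInf
    intro β
    apply div_nonneg _ hn0.le
    exact Finset.sum_nonneg fun i _ => le_min (sq_nonneg _) hB.le
  have hRBB : RB ≤ B := by
    rw [hRB]
    have h0 := ciInf_le hbdd (0 : Fin d → ℝ)
    refine le_trans h0 ?_
    rw [div_le_iff₀ hn0]
    calc ∑ i, min ((∑ j, X i j * 0 - Y i) ^ 2) B ≤ ∑ _i : Fin n, B :=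
          Finset.sum_le_sum fun i _ => min_le_right _ _
      _ = n*B := by simp [mul_comm]
      _ = B*n := by ring
  have hsqrtnn : 0 ≤ Real.sqrt (2 * B ^ 2 * Real.log (1 / α) / n) := Real.sqrt_nonneg _
  -- final split
  rcases eq_or_ne RB 0 with hz|hnz
  · rw [hz, mul_zero]
    rw [hz] at hRBlow
    linarith
  · have hRBpos : 0 < RB := lt_of_le_of_ne hRB0 (Ne.symm hnz)
    have heq := hΔeq hnz
    have hΔlt1 : Δ < 1 := by
      rcases lt_or_eq_of_le hΔmem.2 with h|h
      · exact h
      · exfalso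
        rw [h] at heq
        simp only [sub_self, Real.log_zero] at heq
        have hp : 0 < B * Real.log (1 / α) / (n * RB) := by positivity
        rw [← heq] at hp
        norm_num at hp
    have hkey := tl_log_ineq Δ hΔmem.1.le hΔlt1
    rw [heq] at hkey
    have h2 : Δ^2*((n:ℝ)*RB) ≤ 2*(B*Real.log (1/α)) := by
      rw [div_le_div_iff₀ (by norm_num : (0:ℝ) < 2) (by positivity : (0:ℝ) < (n:ℝ)*RB)] at hkey
      linarith
    have h3 : (Δ*RB)^2 ≤ 2 * B ^ 2 * Real.log (1 / α) / n := by
      rw [le_div_iff₀ hn0]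
      have ha := mul_le_mul_of_nonneg_right h2 hRB0
      have hbb : 2*(B*Real.log (1/α))*RB ≤ 2*(B*Real.log (1/α))*B :=
        mul_le_mul_of_nonneg_left hRBB (by positivity)
      nlinarith [ha, hbb]
    have h4 : Δ*RB ≤ Real.sqrt (2 * B ^ 2 * Real.log (1 / α) / n) :=
      Real.le_sqrt_of_sq_le h3
    have hexp : (1 - Δ) * RB = RB - Δ*RB := by ring
    rw [hexp]
    linarith
end
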